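/- arXiv:1501.01574 — 6 statements merged into one kernel-verified Lean document; each statement's English description precedes it below -/
import Mathlib

section
/- Let p, q be coprime integers with q ≥ 2, and let J : ℤ → ℤ[t,t⁻¹] satisfy J(−m) = −J(m) for all m and J(m) ≠ 0 for all m ≥ 1. Suppose there are rational numbers a*₀, a*₁, b*₀, b*₁, d*₀, d*₁ with b*₀ ≥ 0 and b*₁ ≥ 0, and an integer N, such that for all n ≥ N one has deg₋ J(n) = 4(a*_ε n² + b*_ε n + d*_ε), where ε ∈ {0,1} is the parity of n. If p/q ∉ {4a*₀, 4a*₁}, then there are rational numbers A*₀, A*₁, B*₀, B*₁, D*₀, D*₁ with {A*₀, A*₁} ⊆ {q²a*₀, q²a*₁, pq/4}, B*₀ ≥ 0, B*₁ ≥ 0, and an integer N′ such that for all n ≥ N′ one has JC(n) ≠ 0 and deg₋ JC(n) = 4(A*_ε n² + B*_ε n + D*_ε), where ε is the parity of n. (The lowest-degree half of Theorem 3.6, obtained from Proposition 3.4 applied to the mirror image, expressed for the cabling sum.) -/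
open LaurentPolynomial

/-- `degM f` is the smallest exponent of `t` occurring in the Laurent polynomial `f`
(declared to be `0` for `f = 0`). -/
noncomputable def degM (f : LaurentPolynomial ℤ) : ℤ := WithTop.untopD 0 f.coeff.support.min

/-- The `(p,q)`-cabling sum `JC(n) = Σ_j t^{pq(n²−1) − p·j·(qj+2)} · J(qj+1)`,
the sum over integers `j` with `|j| ≤ n−1` and `j ≡ n−1 (mod 2)`. -/
noncomputable def cablingSum (J : ℤ → LaurentPolynomial ℤ) (p q : ℤ) (n : ℕ) :
    LaurentPolynomial ℤ :=
  ∑ j ∈ (Finset.Icc (1 - (n : ℤ)) ((n : ℤ) - 1)).filter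
      (fun j => j % 2 = ((n : ℤ) - 1) % 2),
    T (p * q * ((n : ℤ) ^ 2 - 1) - p * j * (q * j + 2)) * J (q * j + 1)

/-!
Write `JC(n) = T^{pq(n²-1)} · Σ_j t_j` with `t_j = T^{-pj(qj+2)} J(qj+1)`, the sum running over
the window `|j| ≤ n - 1`, `j ≡ n - 1 (mod 2)`. On a parity class of `j`, the lowest degree `ψ(j)`
of `t_j` is, for `|j|` large, a quadratic in `j` with leading coefficient `L = q(4aq - p)`, where
`a = a*_ε` for the parity `ε` of `qj + 1`; the slope hypothesis says exactly that `L ≠ 0`.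

If `L < 0`, then for large `n` the lowest degree of the window sum is attained only at `j = n - 1`.
If `L > 0`, then `ψ → ∞`, so the coefficients of the window sums stabilise to those of the infinite
sum over the class. If this limit is nonzero, the lowest degree is eventually constant (slope
`pq/4`). Otherwise the window sum is minus the tail, whose lowest degree is attained only at
`j = -(n + 1)`.
-/

open Filter

section LowestDegree

variable {f g : LaurentPolynomial ℤ} {d D : ℤ}

lemma degM_eq_min' (hs : f.coeff.support.Nonempty) : degM f = f.coeff.support.min' hs := by
  rw [degM, ← Finset.coe_min' hs]
  rfl

lemma support_coeff_nonempty (hf : f ≠ 0) : f.coeff.support.Nonempty :=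
  Finsupp.support_nonempty_iff.2 (mt AddMonoidAlgebra.coeff_eq_zero.1 hf)

lemma coeff_eq_zero_of_lt_degM (h : d < degM f) : f.coeff d = 0 := by
  by_cases hf : f = 0
  · simp [hf]
  rw [degM_eq_min' (support_coeff_nonempty hf)] at h
  exact Finsupp.notMem_support_iff.1 fun hd => (Finset.min'_le _ _ hd).not_gt h

lemma coeff_degM_ne_zero (hf : f ≠ 0) : f.coeff (degM f) ≠ 0 := by
  rw [degM_eq_min' (support_coeff_nonempty hf)]
  exact Finsupp.mem_support_iff.1 (Finset.min'_mem _ _)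

lemma ne_zero_and_degM_eq_of_coeff (hD : f.coeff D ≠ 0) (hlt : ∀ d < D, f.coeff d = 0) :
    f ≠ 0 ∧ degM f = D := by
  have hf : f ≠ 0 := by rintro rfl; simp at hD
  refine ⟨hf, le_antisymm ?_ ?_⟩
  · exact not_lt.1 fun h => hD (coeff_eq_zero_of_lt_degM h)
  · exact not_lt.1 fun h => coeff_degM_ne_zero hf (hlt _ h)

lemma ne_zero_and_degM_eq_of_coeff_eq (hg : g ≠ 0) (h : ∀ d ≤ degM g, f.coeff d = g.coeff d) :
    f ≠ 0 ∧ degM f = degM g :=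
  ne_zero_and_degM_eq_of_coeff (h _ le_rfl ▸ coeff_degM_ne_zero hg) fun d hd => by
    rw [h d hd.le, coeff_eq_zero_of_lt_degM hd]

lemma degM_neg (f : LaurentPolynomial ℤ) : degM (-f) = degM f := by
  by_cases hf : f = 0
  · simp [hf]
  refine (ne_zero_and_degM_eq_of_coeff ?_ fun d hd => ?_).2
  · simpa [AddMonoidAlgebra.coeff_neg] using coeff_degM_ne_zero hf
  · simp [AddMonoidAlgebra.coeff_neg, coeff_eq_zero_of_lt_degM hd]

lemma coeff_T_mul (e : ℤ) (f : LaurentPolynomial ℤ) (d : ℤ) :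
    (T e * f).coeff d = f.coeff (d - e) := by
  simpa [neg_add_eq_sub] using AddMonoidAlgebra.coeff_single_mul_apply f (1 : ℤ) e d

lemma T_mul_ne_zero (e : ℤ) (hf : f ≠ 0) : T e * f ≠ 0 :=
  (isUnit_T e).mul_right_eq_zero.not.2 hf

lemma degM_T_mul (e : ℤ) (hf : f ≠ 0) : degM (T e * f) = e + degM f :=
  (ne_zero_and_degM_eq_of_coeff (by rw [coeff_T_mul]; simpa using coeff_degM_ne_zero hf)
    fun d hd => by rw [coeff_T_mul]; exact coeff_eq_zero_of_lt_degM (by omega)).2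

end LowestDegree

section FiniteSums

variable {ι : Type*} {t : ι → LaurentPolynomial ℤ} {s s' : Finset ι} {d D : ℤ}

lemma coeff_sum_eq_zero (h : ∀ j ∈ s, d < degM (t j)) : (∑ j ∈ s, t j).coeff d = 0 := by
  rw [AddMonoidAlgebra.coeff_sum, Finset.sum_apply']
  exact Finset.sum_eq_zero fun j hj => coeff_eq_zero_of_lt_degM (h j hj)

lemma coeff_sum_eq_of_forall_lt {j₀ : ι} (hj₀ : j₀ ∈ s)
    (h : ∀ j ∈ s, j ≠ j₀ → degM (t j₀) < degM (t j)) (hd : d ≤ degM (t j₀)) :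
    (∑ j ∈ s, t j).coeff d = (t j₀).coeff d := by
  rw [AddMonoidAlgebra.coeff_sum, Finset.sum_apply']
  exact Finset.sum_eq_single_of_mem _ hj₀ fun j hj hne =>
    coeff_eq_zero_of_lt_degM (hd.trans_lt (h j hj hne))

lemma coeff_sum_eq_of_subset (hss : s ⊆ s') (h : ∀ j ∈ s', j ∉ s → D < degM (t j))
    (hd : d ≤ D) : (∑ j ∈ s', t j).coeff d = (∑ j ∈ s, t j).coeff d := by
  classical
  have htail : (∑ j ∈ s' \ s, t j).coeff d = 0 := coeff_sum_eq_zero fun j hj =>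
    hd.trans_lt (h j (Finset.sdiff_subset hj) (Finset.mem_sdiff.1 hj).2)
  rw [← Finset.sum_sdiff hss, AddMonoidAlgebra.coeff_add, Finsupp.add_apply, htail, zero_add]

end FiniteSums

lemma exists_eventually_degM_eq {κ : Type*} {l : Filter κ} [l.NeBot]
    {f : κ → LaurentPolynomial ℤ} {c : ℤ → ℤ} {M : ℤ}
    (hM : ∀ n, ∀ d < M, (f n).coeff d = 0) (hc : ∀ d, ∀ᶠ n in l, (f n).coeff d = c d)
    (hne : ∃ d, c d ≠ 0) : ∃ D, ∀ᶠ n in l, f n ≠ 0 ∧ degM (f n) = D := by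
  classical
  have hcM : ∀ d < M, c d = 0 := fun d hd => by
    obtain ⟨n, hn⟩ := (hc d).exists
    rw [← hn, hM n d hd]
  obtain ⟨D, hD, hleast⟩ := Int.exists_least_of_bdd
    ⟨M, fun d hd => not_lt.1 fun h => hd (hcM d h)⟩ hne
  have hMD : M ≤ D := not_lt.1 fun h => hD (hcM D h)
  refine ⟨D, ?_⟩
  filter_upwards [(Filter.eventually_all_finset (Finset.Icc M D)).2 fun d _ => hc d] with n hn
  refine ne_zero_and_degM_eq_of_coeff ?_ fun d hd => ?_
  · rwa [hn D (Finset.mem_Icc.2 ⟨hMD, le_rfl⟩)]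
  · by_cases hdM : d < M
    · exact hM n d hdM
    rw [hn d (Finset.mem_Icc.2 ⟨not_lt.1 hdM, hd.le⟩)]
    exact not_not.1 fun h => (hleast d h).not_gt hd

lemma tendsto_natCast_add_atTop (k : ℤ) : Tendsto (fun n : ℕ => (n : ℤ) + k) atTop atTop :=
  tendsto_atTop_add_const_right _ k tendsto_natCast_atTop_atTop

lemma eventually_lt_linear {α : ℚ} (hα : 0 < α) (β B : ℚ) :
    ∀ᶠ x : ℤ in atTop, B < α * x + β :=
  (tendsto_atTop_add_const_right _ β
    (tendsto_intCast_atTop_atTop.const_mul_atTop hα)).eventually_gt_atTop B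

lemma eventually_lt_quadratic {L : ℚ} (hL : 0 < L) (c e B : ℚ) :
    ∀ᶠ x : ℤ in atTop, ∀ j : ℤ, x ≤ j → B < L * j ^ 2 + c * j + e := by
  filter_upwards [eventually_ge_atTop 1, eventually_lt_linear hL c (max 0 (B - e))]
    with x hx₁ hx j hj
  have hjx : (x : ℚ) ≤ j := by exact_mod_cast hj
  have hj₁ : (1 : ℚ) ≤ j := by exact_mod_cast hx₁.trans hj
  nlinarith [mul_le_mul_of_nonneg_left hjx hL.le, le_max_left 0 (B - e), le_max_right 0 (B - e)]

def QuadraticOnTails (S : Set ℤ) (ψ : ℤ → ℚ) (L c e c' e' : ℚ) : Prop :=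
  ∃ j₁ : ℤ, ∀ j ∈ S, (j₁ ≤ j → ψ j = L * j ^ 2 + c * j + e) ∧
    (j ≤ -j₁ → ψ j = L * j ^ 2 + c' * j + e')

namespace QuadraticOnTails

variable {S : Set ℤ} {ψ : ℤ → ℚ} {L c e c' e' : ℚ}

lemma eventually_lt_of_neg (h : QuadraticOnTails S ψ L c e c' e') (hL : L < 0)
    (hc : c + c' < 0) :
    ∀ᶠ x : ℤ in atTop, x ∈ S → ∀ j ∈ S, -x ≤ j → j < x → ψ x < ψ j := by
  obtain ⟨j₁, hj₁⟩ := h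
  obtain ⟨M, hM⟩ := ((Set.finite_Icc (-j₁) j₁).image ψ).bddBelow
  have hL' : 0 < -L := neg_pos.2 hL
  filter_upwards [eventually_ge_atTop j₁, eventually_lt_linear hL' (-(L * j₁) - c) 0,
    eventually_lt_linear hL' (-(L * j₁) + c') 0,
    eventually_lt_linear (neg_pos.2 hc) (e' - e) 0,
    eventually_lt_quadratic hL' (-c) (-e) (-M)]
    with x hxj₁ hP hN hlin hquad hxS j hjS hxj hjx
  have hjxq : (j : ℚ) < x := by exact_mod_cast hjx
  rw [(hj₁ x hxS).1 hxj₁]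
  by_cases hjP : j₁ ≤ j
  · have hj₁q : (j₁ : ℚ) ≤ j := by exact_mod_cast hjP
    rw [(hj₁ j hjS).1 hjP]
    -- `ψ x - ψ j = (x - j) (L (x + j) + c)`
    have : L * (x + j) + c < 0 := by nlinarith [mul_le_mul_of_nonpos_left hj₁q hL.le]
    nlinarith [mul_pos (sub_pos.2 hjxq) (neg_pos.2 this)]
  by_cases hjN : j ≤ -j₁
  · have hj₁q : (j : ℚ) ≤ -j₁ := by exact_mod_cast hjN
    have hxjq : -(x : ℚ) ≤ j := by exact_mod_cast hxj
    rw [(hj₁ j hjS).2 hjN]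
    -- `ψ x - ψ j = (x + j) (L (x - j) - c') + (c + c') x + e - e'`
    have : L * (x - j) - c' < 0 := by nlinarith [mul_le_mul_of_nonpos_left hj₁q hL.le]
    nlinarith [mul_nonneg (neg_le_iff_add_nonneg.1 hxjq) (neg_pos.2 this).le]
  · have hMj : M ≤ ψ j := hM ⟨j, Set.mem_Icc.2 ⟨by omega, by omega⟩, rfl⟩
    linarith [hquad x le_rfl]

lemma eventually_lt (h : QuadraticOnTails S ψ L c e c' e') (hL : 0 < L) (B : ℚ) :
    ∀ᶠ x : ℤ in atTop, ∀ j ∈ S, x ≤ |j| → B < ψ j := by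
  obtain ⟨j₁, hj₁⟩ := h
  filter_upwards [eventually_ge_atTop j₁, eventually_lt_quadratic hL c e B,
    eventually_lt_quadratic hL (-c') e' B] with x hxj₁ hP hN j hjS hxj
  rcases le_abs'.1 hxj with hj | hj
  · rw [(hj₁ j hjS).2 (by omega)]
    have := hN (-j) (by omega)
    push_cast at this
    linarith
  · rw [(hj₁ j hjS).1 (by omega)]
    exact hP j hj

lemma bddBelow (h : QuadraticOnTails S ψ L c e c' e') (hL : 0 < L) : BddBelow (ψ '' S) := by
  obtain ⟨x, hx⟩ := (h.eventually_lt hL 0).exists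
  refine (((Set.finite_Icc (-x) x).image ψ).bddBelow.union (bddBelow_Ici (a := 0))).mono ?_
  rintro _ ⟨j, hjS, rfl⟩
  by_cases hjx : x ≤ |j|
  · exact Or.inr (hx j hjS hjx).le
  · exact Or.inl ⟨j, Set.mem_Icc.2 (abs_le.1 (not_le.1 hjx).le), rfl⟩

lemma eventually_neg_lt (h : QuadraticOnTails S ψ L c e c' e') (hL : 0 < L) (hc : 0 < c + c') :
    ∀ᶠ x : ℤ in atTop, -x ∈ S → ∀ j ∈ S, x ≤ |j| → j ≠ -x → ψ (-x) < ψ j := by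
  obtain ⟨j₁, hj₁⟩ := h
  have h2L : 0 < 2 * L := by linarith
  filter_upwards [eventually_ge_atTop j₁, eventually_ge_atTop (-j₁),
    eventually_lt_linear h2L c 0, eventually_lt_linear h2L (-c') 0,
    eventually_lt_linear hc (e - e') 0] with x hxj₁ hxj₁' hP hN hlin hxS j hjS hxj hjx
  rw [(hj₁ (-x) hxS).2 (by omega)]
  push_cast
  rcases le_abs'.1 hxj with hj | hj
  · have hjq : (j : ℚ) < -x := by exact_mod_cast lt_of_le_of_ne hj hjx
    rw [(hj₁ j hjS).2 (by omega)]
    -- `ψ j - ψ (-x) = (-x - j) (L (x - j) - c')`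
    have : 0 < L * (x - j) - c' := by nlinarith
    nlinarith [mul_pos (sub_pos.2 hjq) this]
  · have hjq : (x : ℚ) ≤ j := by exact_mod_cast hj
    rw [(hj₁ j hjS).1 (by omega)]
    -- `ψ j - ψ (-x) = (j - x) (L (j + x) + c) + (c + c') x + e - e'`
    have : 0 < L * (j + x) + c := by nlinarith
    nlinarith [mul_nonneg (sub_nonneg.2 hjq) this.le]

lemma eventually_eq_right (h : QuadraticOnTails S ψ L c e c' e') :
    ∀ᶠ x : ℤ in atTop, x ∈ S → ψ x = L * x ^ 2 + c * x + e := by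
  obtain ⟨j₁, hj₁⟩ := h
  filter_upwards [eventually_ge_atTop j₁] with x hx hxS using (hj₁ x hxS).1 hx

lemma eventually_eq_left (h : QuadraticOnTails S ψ L c e c' e') :
    ∀ᶠ x : ℤ in atTop, -x ∈ S → ψ (-x) = L * x ^ 2 - c' * x + e' := by
  obtain ⟨j₁, hj₁⟩ := h
  filter_upwards [eventually_ge_atTop j₁] with x hx hxS
  rw [(hj₁ (-x) hxS).2 (by omega)]
  push_cast
  ring

end QuadraticOnTails

noncomputable def classWindow (r : ℤ) (n : ℕ) : Finset ℤ :=
  (Finset.Icc (1 - (n : ℤ)) ((n : ℤ) - 1)).filter (fun j => j % 2 = r)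

lemma mem_classWindow {r j : ℤ} {n : ℕ} :
    j ∈ classWindow r n ↔ (1 - (n : ℤ) ≤ j ∧ j ≤ (n : ℤ) - 1) ∧ j % 2 = r := by
  rw [classWindow, Finset.mem_filter, Finset.mem_Icc]

lemma classWindow_mono (r : ℤ) {n n' : ℕ} (h : n ≤ n') : classWindow r n ⊆ classWindow r n' :=
  Finset.filter_subset_filter _ (Finset.Icc_subset_Icc (by omega) (by omega))

section WindowSums

variable {t : ℤ → LaurentPolynomial ℤ} {r : ℤ} {L c e c' e' : ℚ}

lemma eventually_degM_sum_classWindow_of_neg (ht : ∀ j, t j ≠ 0)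
    (h : QuadraticOnTails {j | j % 2 = r} (fun j => (degM (t j) : ℚ)) L c e c' e')
    (hL : L < 0) (hc : c + c' < 0) :
    ∀ᶠ n : ℕ in atTop, ((n : ℤ) - 1) % 2 = r → (∑ j ∈ classWindow r n, t j) ≠ 0 ∧
      (degM (∑ j ∈ classWindow r n, t j) : ℚ) = L * (n - 1) ^ 2 + c * (n - 1) + e := by
  filter_upwards [(tendsto_natCast_add_atTop (-1)).eventually (h.eventually_lt_of_neg hL hc),
    (tendsto_natCast_add_atTop (-1)).eventually h.eventually_eq_right, eventually_ge_atTop 1]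
    with n hmin hval hn hr
  rw [← sub_eq_add_neg] at hmin hval
  have hxS : (n : ℤ) - 1 ∈ {j : ℤ | j % 2 = r} := hr
  obtain ⟨hne, hdeg⟩ := ne_zero_and_degM_eq_of_coeff_eq (ht _) fun d hd =>
    coeff_sum_eq_of_forall_lt (mem_classWindow.2 ⟨⟨by omega, le_rfl⟩, hr⟩) (fun j hj hjn => by
      obtain ⟨⟨hj₁, hj₂⟩, hjr⟩ := mem_classWindow.1 hj
      exact_mod_cast hmin hxS j hjr (by omega) (by omega)) hd
  refine ⟨hne, ?_⟩
  rw [hdeg, hval hxS]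
  push_cast
  ring

lemma eventually_coeff_sum_classWindow_eq
    (h : QuadraticOnTails {j | j % 2 = r} (fun j => (degM (t j) : ℚ)) L c e c' e')
    (hL : 0 < L) (D : ℤ) :
    ∀ᶠ n : ℕ in atTop, ∀ n' ≥ n, ∀ d ≤ D,
      (∑ j ∈ classWindow r n', t j).coeff d = (∑ j ∈ classWindow r n, t j).coeff d := by
  filter_upwards [(tendsto_natCast_add_atTop 0).eventually (h.eventually_lt hL D)]
    with n hn n' hn' d hd
  refine coeff_sum_eq_of_subset (classWindow_mono r hn') (fun j hj hjn => ?_) hd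
  obtain ⟨⟨hj₁, hj₂⟩, hjr⟩ := mem_classWindow.1 hj
  have hjn' : ¬(1 - (n : ℤ) ≤ j ∧ j ≤ (n : ℤ) - 1) := fun h' => hjn (mem_classWindow.2 ⟨h', hjr⟩)
  exact_mod_cast hn j hjr (le_abs'.2 (by omega))

lemma eventually_degM_sum_classWindow_of_coeff_eventually_zero (ht : ∀ j, t j ≠ 0)
    (h : QuadraticOnTails {j | j % 2 = r} (fun j => (degM (t j) : ℚ)) L c e c' e')
    (hL : 0 < L) (hc : 0 < c + c')
    (hzero : ∀ d, ∀ᶠ n : ℕ in atTop, (∑ j ∈ classWindow r n, t j).coeff d = 0) :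
    ∀ᶠ n : ℕ in atTop, ((n : ℤ) - 1) % 2 = r → (∑ j ∈ classWindow r n, t j) ≠ 0 ∧
      (degM (∑ j ∈ classWindow r n, t j) : ℚ) = L * (n + 1) ^ 2 - c' * (n + 1) + e' := by
  filter_upwards [(tendsto_natCast_add_atTop 1).eventually (h.eventually_neg_lt hL hc),
    (tendsto_natCast_add_atTop 1).eventually h.eventually_eq_left] with n hmin hval hr
  set j₀ : ℤ := -((n : ℤ) + 1)
  have hj₀S : j₀ ∈ {j : ℤ | j % 2 = r} := by show -((n : ℤ) + 1) % 2 = r; omega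
  suffices hcoeff : ∀ d ≤ degM (t j₀), (∑ j ∈ classWindow r n, t j).coeff d = (-t j₀).coeff d by
    obtain ⟨hne, hdeg⟩ := ne_zero_and_degM_eq_of_coeff_eq (neg_ne_zero.2 (ht j₀))
      (by rwa [degM_neg])
    refine ⟨hne, ?_⟩
    rw [hdeg, degM_neg, hval hj₀S]
    push_cast
    ring
  intro d hd
  obtain ⟨n', hn'0, hn'⟩ := ((hzero d).and (eventually_ge_atTop (n + 2))).exists
  classical
  have hsplit := Finset.sum_sdiff (f := t) (classWindow_mono r (show n ≤ n' by omega))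
  have htail : (∑ j ∈ classWindow r n' \ classWindow r n, t j).coeff d = (t j₀).coeff d := by
    refine coeff_sum_eq_of_forall_lt ?_ (fun j hj hjn => ?_) hd
    · rw [Finset.mem_sdiff, mem_classWindow, mem_classWindow]
      omega
    · rw [Finset.mem_sdiff, mem_classWindow, mem_classWindow] at hj
      exact_mod_cast hmin hj₀S j hj.1.2 (le_abs'.2 (by omega)) hjn
  have hcoeff := congrArg (fun f => f.coeff d) hsplit
  simp only [AddMonoidAlgebra.coeff_add, Finsupp.add_apply, htail, hn'0] at hcoeff
  rw [AddMonoidAlgebra.coeff_neg, Finsupp.neg_apply]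
  omega

lemma degM_sum_classWindow_of_pos (ht : ∀ j, t j ≠ 0)
    (h : QuadraticOnTails {j | j % 2 = r} (fun j => (degM (t j) : ℚ)) L c e c' e')
    (hL : 0 < L) (hc : 0 < c + c') :
    (∃ D : ℤ, ∀ᶠ n : ℕ in atTop,
      (∑ j ∈ classWindow r n, t j) ≠ 0 ∧ degM (∑ j ∈ classWindow r n, t j) = D) ∨
    ∀ᶠ n : ℕ in atTop, ((n : ℤ) - 1) % 2 = r → (∑ j ∈ classWindow r n, t j) ≠ 0 ∧
      (degM (∑ j ∈ classWindow r n, t j) : ℚ) = L * (n + 1) ^ 2 - c' * (n + 1) + e' := by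
  have hstab : ∀ d, ∃ a, ∀ᶠ n : ℕ in atTop, (∑ j ∈ classWindow r n, t j).coeff d = a := by
    intro d
    obtain ⟨n₀, hn₀⟩ := (eventually_coeff_sum_classWindow_eq h hL d).exists
    exact ⟨_, (eventually_ge_atTop n₀).mono fun n hn => hn₀ n hn d le_rfl⟩
  -- `lim d` is the coefficient of `T d` in the (formal) sum of `t j` over the whole class
  choose lim hlim using hstab
  by_cases hne : ∃ d, lim d ≠ 0
  · obtain ⟨M, hM⟩ := h.bddBelow hL
    refine .inl (exists_eventually_degM_eq (M := ⌈M⌉)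
      (fun n d hd => coeff_sum_eq_zero fun j hj => ?_) hlim hne)
    have hMj : M ≤ degM (t j) := hM ⟨j, (mem_classWindow.1 hj).2, rfl⟩
    exact_mod_cast (Int.lt_ceil.1 hd).trans_le hMj
  push Not at hne
  exact .inr (eventually_degM_sum_classWindow_of_coeff_eventually_zero ht h hL hc
    fun d => (hlim d).mono fun n hn => hn.trans (hne d))

end WindowSums

lemma Function.Odd.apply_ne_zero {G : Type*} [AddGroup G] {J : ℤ → G} (hJ : J.Odd)
    (hpos : ∀ m, 1 ≤ m → J m ≠ 0) {m : ℤ} (hm : m ≠ 0) : J m ≠ 0 := by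
  rcases hm.lt_or_gt with hm | hm
  · rw [← neg_neg m, hJ.eq]
    exact neg_ne_zero.2 (hpos _ (by omega))
  · exact hpos m hm

lemma Function.Odd.degM_apply {J : ℤ → LaurentPolynomial ℤ} (hJ : J.Odd) (m : ℤ) :
    degM (J m) = degM (J (-m)) := by
  rw [hJ.eq, degM_neg]

noncomputable def cablingTerm (J : ℤ → LaurentPolynomial ℤ) (p q j : ℤ) : LaurentPolynomial ℤ :=
  T (-(p * j * (q * j + 2))) * J (q * j + 1)

section Cabling

variable {J : ℤ → LaurentPolynomial ℤ} {p q : ℤ}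

lemma cablingSum_eq_T_mul (J : ℤ → LaurentPolynomial ℤ) (p q : ℤ) (n : ℕ) :
    cablingSum J p q n = T (p * q * ((n : ℤ) ^ 2 - 1)) *
      ∑ j ∈ classWindow (((n : ℤ) - 1) % 2) n, cablingTerm J p q j := by
  rw [cablingSum, classWindow, Finset.mul_sum]
  refine Finset.sum_congr rfl fun j _ => ?_
  rw [cablingTerm, ← mul_assoc, ← T_add, sub_eq_add_neg]

lemma mul_add_one_ne_zero (hq : 2 ≤ q) (j : ℤ) : q * j + 1 ≠ 0 := fun h => by
  rcases le_or_gt 0 j with hj | hj <;> nlinarith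

lemma cablingTerm_ne_zero (hq : 2 ≤ q) (hJ : J.Odd) (hpos : ∀ m, 1 ≤ m → J m ≠ 0) (j : ℤ) :
    cablingTerm J p q j ≠ 0 :=
  T_mul_ne_zero _ (hJ.apply_ne_zero hpos (mul_add_one_ne_zero hq j))

lemma quadraticOnTails_cablingTerm (hq : 2 ≤ q) (hJ : J.Odd) (hpos : ∀ m, 1 ≤ m → J m ≠ 0)
    (r : ℤ) {a b d : ℚ} {N : ℤ}
    (hdeg : ∀ m : ℤ, N ≤ m → m % 2 = (q * r + 1) % 2 →
      (degM (J m) : ℚ) = 4 * (a * m ^ 2 + b * m + d)) :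
    QuadraticOnTails {j | j % 2 = r} (fun j => (degM (cablingTerm J p q j) : ℚ))
      (q * (4 * a * q - p)) (8 * a * q - 2 * p + 4 * b * q) (4 * (a + b + d))
      (8 * a * q - 2 * p - 4 * b * q) (4 * (a - b + d)) := by
  refine ⟨|N| + 1, fun j (hj : j % 2 = r) => ?_⟩
  have hmod : (q * j + 1) % 2 = (q * r + 1) % 2 :=
    ((show j ≡ r [ZMOD 2] by unfold Int.ModEq; omega).mul_left q).add_right 1
  have hT : (degM (cablingTerm J p q j) : ℚ) = -(p * j * (q * j + 2)) + degM (J (q * j + 1)) := by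
    rw [cablingTerm, degM_T_mul _ (hJ.apply_ne_zero hpos (mul_add_one_ne_zero hq j))]
    push_cast
    ring
  have hN := le_abs_self N
  have hN₀ := abs_nonneg N
  have hq1 : (1 : ℤ) ≤ q := by omega
  refine ⟨fun hjN => ?_, fun hjN => ?_⟩
  · have hm : N ≤ q * j + 1 := by
      nlinarith [mul_le_mul_of_nonneg_right hq1 (by linarith : (0 : ℤ) ≤ j)]
    dsimp only
    rw [hT, hdeg _ hm hmod]
    push_cast
    ring
  · have hm : N ≤ -(q * j + 1) := by
      nlinarith [mul_le_mul_of_nonneg_right hq1 (by linarith : (0 : ℤ) ≤ -j)]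
    dsimp only
    rw [hT, hJ.degM_apply, hdeg _ hm (by rw [Int.neg_emod_two]; exact hmod)]
    push_cast
    ring

lemma degM_cablingSum_eq {n : ℕ} {W : ℚ}
    (hW : (∑ j ∈ classWindow (((n : ℤ) - 1) % 2) n, cablingTerm J p q j) ≠ 0 ∧
      (degM (∑ j ∈ classWindow (((n : ℤ) - 1) % 2) n, cablingTerm J p q j) : ℚ) = W) :
    cablingSum J p q n ≠ 0 ∧ (degM (cablingSum J p q n) : ℚ) = p * q * ((n : ℚ) ^ 2 - 1) + W := by
  rw [cablingSum_eq_T_mul, degM_T_mul _ hW.1, ← hW.2]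
  exact ⟨T_mul_ne_zero _ hW.1, by push_cast; ring⟩

end Cabling

theorem exists_degM_cablingSum_eq_of_parity {J : ℤ → LaurentPolynomial ℤ} {p q : ℤ} (hq : 2 ≤ q)
    (hJ : J.Odd) (hpos : ∀ m, 1 ≤ m → J m ≠ 0) (r : ℤ) {a b d : ℚ} (hb : 0 ≤ b) {N : ℤ}
    (hdeg : ∀ m : ℤ, N ≤ m → m % 2 = (q * r + 1) % 2 →
      (degM (J m) : ℚ) = 4 * (a * m ^ 2 + b * m + d))
    (hslope : (p : ℚ) / q ≠ 4 * a) :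
    ∃ A B D : ℚ, (A = q ^ 2 * a ∨ A = p * q / 4) ∧ 0 ≤ B ∧
      ∀ᶠ n : ℕ in atTop, ((n : ℤ) - 1) % 2 = r → cablingSum J p q n ≠ 0 ∧
        (degM (cablingSum J p q n) : ℚ) = 4 * (A * n ^ 2 + B * n + D) := by
  have hq0 : (0 : ℚ) < q := by exact_mod_cast (by omega : (0 : ℤ) < q)
  have hq1 : (1 : ℚ) ≤ q := by exact_mod_cast (by omega : (1 : ℤ) ≤ q)
  have hslope' : 4 * a * q - p ≠ 0 := fun h => hslope (by field_simp; linarith)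
  have ht := cablingTerm_ne_zero (p := p) hq hJ hpos
  have hquad := quadraticOnTails_cablingTerm (p := p) hq hJ hpos r hdeg
  rcases hslope'.lt_or_gt with hslope_neg | hslope_pos
  · refine ⟨q ^ 2 * a, (q - 1) * (p - 4 * a * q) / 2 + b * q,
      (q * (4 * a * q - p) - (8 * a * q - 2 * p + 4 * b * q) + 4 * (a + b + d) - p * q) / 4,
      Or.inl rfl, by nlinarith, ?_⟩
    filter_upwards [eventually_degM_sum_classWindow_of_neg ht hquad
      (mul_neg_of_pos_of_neg hq0 hslope_neg) (by linarith)] with n hn hr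
    subst hr
    obtain ⟨hne, hdeg⟩ := degM_cablingSum_eq (hn rfl)
    exact ⟨hne, by rw [hdeg]; ring⟩
  rcases degM_sum_classWindow_of_pos ht hquad (mul_pos hq0 hslope_pos) (by linarith)
    with ⟨D, hD⟩ | htail
  · refine ⟨p * q / 4, 0, (D - p * q) / 4, Or.inr rfl, le_rfl, ?_⟩
    filter_upwards [hD] with n hn hr
    subst hr
    obtain ⟨hne, hdeg⟩ := degM_cablingSum_eq ⟨hn.1, congrArg _ hn.2⟩
    exact ⟨hne, by rw [hdeg]; ring⟩
  · refine ⟨q ^ 2 * a, (q - 1) * (4 * a * q - p) / 2 + b * q,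
      (q * (4 * a * q - p) - (8 * a * q - 2 * p - 4 * b * q) + 4 * (a - b + d) - p * q) / 4,
      Or.inl rfl, by nlinarith, ?_⟩
    filter_upwards [htail] with n hn hr
    subst hr
    obtain ⟨hne, hdeg⟩ := degM_cablingSum_eq (hn rfl)
    exact ⟨hne, by rw [hdeg]; ring⟩

theorem statement1_general (p q : ℤ) (hq : 2 ≤ q)
    (J : ℤ → LaurentPolynomial ℤ)
    (hJodd : ∀ m : ℤ, J (-m) = -J m)
    (hJne : ∀ m : ℤ, 1 ≤ m → J m ≠ 0)
    (a₀ a₁ b₀ b₁ d₀ d₁ : ℚ) (hb₀ : 0 ≤ b₀) (hb₁ : 0 ≤ b₁) (N : ℤ)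
    (hdeg : ∀ n : ℤ, N ≤ n →
      (degM (J n) : ℚ) =
        4 * ((if Even n then a₀ else a₁) * (n : ℚ) ^ 2 +
             (if Even n then b₀ else b₁) * (n : ℚ) +
             (if Even n then d₀ else d₁)))
    (hslope₀ : (p : ℚ) / (q : ℚ) ≠ 4 * a₀)
    (hslope₁ : (p : ℚ) / (q : ℚ) ≠ 4 * a₁) :
    ∃ A₀ A₁ B₀ B₁ D₀ D₁ : ℚ,
      ({A₀, A₁} : Set ℚ) ⊆
        ({(q : ℚ) ^ 2 * a₀, (q : ℚ) ^ 2 * a₁, (p : ℚ) * (q : ℚ) / 4} : Set ℚ) ∧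
      0 ≤ B₀ ∧ 0 ≤ B₁ ∧
      ∃ N' : ℤ, ∀ n : ℕ, N' ≤ (n : ℤ) →
        cablingSum J p q n ≠ 0 ∧
        (degM (cablingSum J p q n) : ℚ) =
          4 * ((if Even n then A₀ else A₁) * (n : ℚ) ^ 2 +
               (if Even n then B₀ else B₁) * (n : ℚ) +
               (if Even n then D₀ else D₁)) := by
  have hclass : ∀ r : ℤ, ∃ A B D : ℚ,
      A ∈ ({(q : ℚ) ^ 2 * a₀, (q : ℚ) ^ 2 * a₁, (p : ℚ) * (q : ℚ) / 4} : Set ℚ) ∧ 0 ≤ B ∧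
      ∀ᶠ n : ℕ in atTop, ((n : ℤ) - 1) % 2 = r → cablingSum J p q n ≠ 0 ∧
        (degM (cablingSum J p q n) : ℚ) = 4 * (A * n ^ 2 + B * n + D) := by
    intro r
    have hpar : ∀ m : ℤ, m % 2 = (q * r + 1) % 2 → (Even m ↔ Even (q * r + 1)) := by
      intro m hm
      rw [Int.even_iff, Int.even_iff, hm]
    by_cases he : Even (q * r + 1)
    · obtain ⟨A, B, D, hA, hB, h⟩ := exists_degM_cablingSum_eq_of_parity hq hJodd hJne r hb₀
        (fun m hN hm => by simpa [(hpar m hm).2 he] using hdeg m hN) hslope₀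
      exact ⟨A, B, D, by rcases hA with rfl | rfl <;> simp, hB, h⟩
    · obtain ⟨A, B, D, hA, hB, h⟩ := exists_degM_cablingSum_eq_of_parity hq hJodd hJne r hb₁
        (fun m hN hm => by simpa [mt (hpar m hm).1 he] using hdeg m hN) hslope₁
      exact ⟨A, B, D, by rcases hA with rfl | rfl <;> simp, hB, h⟩
  -- for even `n` the sum runs over odd `j`, for odd `n` over even `j`
  obtain ⟨A₀, B₀, D₀, hA₀, hB₀, heven⟩ := hclass 1
  obtain ⟨A₁, B₁, D₁, hA₁, hB₁, hodd⟩ := hclass 0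
  obtain ⟨N₀, hN₀⟩ := eventually_atTop.1 (heven.and hodd)
  refine ⟨A₀, A₁, B₀, B₁, D₀, D₁, Set.pair_subset hA₀ hA₁, hB₀, hB₁, N₀, fun n hn => ?_⟩
  obtain ⟨hn₀, hn₁⟩ := hN₀ n (by exact_mod_cast hn)
  rcases Nat.even_or_odd n with he | ho
  · simpa [he] using hn₀ (by obtain ⟨k, rfl⟩ := he; push_cast; omega)
  · simpa [Nat.not_even_iff_odd.2 ho] using hn₁ (by obtain ⟨k, rfl⟩ := ho; push_cast; omega)

/-- The lowest-degree half of Theorem 3.6 of Kalfagianni–Tran, expressed for the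
cabling sum. -/
theorem statement1 (p q : ℤ) (hq : 2 ≤ q) (hcop : Int.gcd p q = 1)
    (J : ℤ → LaurentPolynomial ℤ)
    (hJodd : ∀ m : ℤ, J (-m) = -J m)
    (hJne : ∀ m : ℤ, 1 ≤ m → J m ≠ 0)
    (a₀ a₁ b₀ b₁ d₀ d₁ : ℚ) (hb₀ : 0 ≤ b₀) (hb₁ : 0 ≤ b₁) (N : ℤ)
    (hdeg : ∀ n : ℤ, N ≤ n →
      (degM (J n) : ℚ) =
        4 * ((if Even n then a₀ else a₁) * (n : ℚ) ^ 2 +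
             (if Even n then b₀ else b₁) * (n : ℚ) +
             (if Even n then d₀ else d₁)))
    (hslope₀ : (p : ℚ) / (q : ℚ) ≠ 4 * a₀)
    (hslope₁ : (p : ℚ) / (q : ℚ) ≠ 4 * a₁) :
    ∃ A₀ A₁ B₀ B₁ D₀ D₁ : ℚ,
      ({A₀, A₁} : Set ℚ) ⊆
        ({(q : ℚ) ^ 2 * a₀, (q : ℚ) ^ 2 * a₁, (p : ℚ) * (q : ℚ) / 4} : Set ℚ) ∧
      0 ≤ B₀ ∧ 0 ≤ B₁ ∧
      ∃ N' : ℤ, ∀ n : ℕ, N' ≤ (n : ℤ) →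
        cablingSum J p q n ≠ 0 ∧
        (degM (cablingSum J p q n) : ℚ) =
          4 * ((if Even n then A₀ else A₁) * (n : ℚ) ^ 2 +
               (if Even n then B₀ else B₁) * (n : ℚ) +
               (if Even n then D₀ else D₁)) :=
  statement1_general p q hq J hJodd hJne a₀ a₁ b₀ b₁ d₀ d₁ hb₀ hb₁ N hdeg hslope₀ hslope₁
end

section
/- Let q ≥ 2 and p be integers, and let a, b, d be real numbers with b ≤ 0 and p > 4aq. For k ∈ S_n set f(k) = −pk(qk+1) + a(2qk+1)² + b·|2qk+1| + d. Then for every even n ≥ 2 and every k ∈ S_n with k ≠ −1/2 one has f(k) < f(−1/2), and for every odd n ≥ 1 and every k ∈ S_n with k ≠ 0 one has f(k) < f(0). Consequently, for every n ≥ 1, max_{k∈S_n} ( pq(n²−1)/4 + f(k) ) = (pq/4)·n² + C_ε, where C_ε depends only on the parity ε of n (C₀ = f(−1/2) − pq/4 for n even, C₁ = f(0) − pq/4 for n odd); in particular the coefficient of n is 0. (The 'concave down' maximization step in the proof of Proposition 3.4.) -/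
/-!
Since `-p k (q k + 1) = -(p / 4q) ((2qk + 1)² - 1)`, the value `f k` is `c t² + b t + e` in
`t = |2qk + 1|`, with `c = a - p / 4q < 0` and `b ≤ 0`; so `f` decreases strictly as `t` grows.
For `k = j/2 ∈ S_n` we have `t = |qj + 1|`, which over odd `j` is smallest (`= q - 1`) only at
`j = -1`, and over even `j` is smallest (`= 1`) only at `j = 0`.
-/

/-- `Sn n` is the set of real numbers `k = j/2` where `j` is an integer with
`|j| ≤ n − 1` and `j ≡ n − 1 (mod 2)`; i.e. the integers (if `n` is odd) or
half-odd-integers (if `n` is even) `k` with `|k| ≤ (n−1)/2`. -/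
def Sn (n : ℤ) : Set ℝ :=
  {k | ∃ j : ℤ, k = (j : ℝ) / 2 ∧ |j| ≤ n - 1 ∧ j % 2 = (n - 1) % 2}

open Set

lemma isGreatest_image_of_forall_ne_lt {α β : Type*} [Preorder β] {g : α → β} {S : Set α}
    {x₀ : α} (hx₀ : x₀ ∈ S) (h : ∀ x ∈ S, x ≠ x₀ → g x < g x₀) :
    IsGreatest (g '' S) (g x₀) := by
  refine ⟨mem_image_of_mem g hx₀, forall_mem_image.2 fun x hx => ?_⟩
  rcases eq_or_ne x x₀ with rfl | hne
  · exact le_rfl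
  · exact (h x hx hne).le

lemma strictAntiOn_quadratic {c b : ℝ} (hc : c < 0) (hb : b ≤ 0) (e : ℝ) :
    StrictAntiOn (fun t : ℝ => c * t ^ 2 + b * t + e) (Ici 0) := by
  intro s hs t _ hst
  simp only [mem_Ici] at hs
  nlinarith [mul_lt_mul_of_neg_left (add_lt_add_of_lt_of_le hst hst.le) hc]

section Integers

variable {q j : ℤ}

lemma sub_one_lt_abs_mul_add_one_of_odd (hq : 2 ≤ q) (hj : Odd j) (hj₁ : j ≠ -1) :
    q - 1 < |q * j + 1| := by
  rw [Int.odd_iff] at hj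
  rcases le_or_gt 1 j with h | h
  · exact lt_abs.2 (Or.inl (by nlinarith))
  · exact lt_abs.2 (Or.inr (by nlinarith [show j ≤ -3 by omega]))

lemma one_lt_abs_mul_add_one_of_even (hq : 2 ≤ q) (hj : Even j) (hj₀ : j ≠ 0) :
    1 < |q * j + 1| := by
  rw [Int.even_iff] at hj
  rcases le_or_gt 1 j with h | h
  · exact lt_abs.2 (Or.inl (by nlinarith))
  · exact lt_abs.2 (Or.inr (by nlinarith [show j ≤ -2 by omega]))

end Integers

section Sn

variable {n : ℤ} {k : ℝ}

lemma exists_odd_of_mem_Sn (hn : Even n) (hk : k ∈ Sn n) : ∃ j : ℤ, Odd j ∧ k = j / 2 := by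
  obtain ⟨j, rfl, -, hj⟩ := hk
  exact ⟨j, Int.odd_iff.2 (by rw [Int.even_iff] at hn; omega), rfl⟩

lemma exists_even_of_mem_Sn (hn : Odd n) (hk : k ∈ Sn n) : ∃ j : ℤ, Even j ∧ k = j / 2 := by
  obtain ⟨j, rfl, -, hj⟩ := hk
  exact ⟨j, Int.even_iff.2 (by rw [Int.odd_iff] at hn; omega), rfl⟩

lemma neg_half_mem_Sn (hn : 1 ≤ n) (hn' : Even n) : -(1 / 2 : ℝ) ∈ Sn n := by
  rw [Int.even_iff] at hn'
  exact ⟨-1, by norm_num, by rw [abs_neg, abs_one]; omega, by omega⟩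

lemma zero_mem_Sn (hn : 1 ≤ n) (hn' : Odd n) : (0 : ℝ) ∈ Sn n := by
  rw [Int.odd_iff] at hn'
  exact ⟨0, by norm_num, by rw [abs_zero]; omega, by omega⟩

lemma abs_two_mul_half_add_one (q j : ℤ) :
    |2 * (q : ℝ) * ((j : ℝ) / 2) + 1| = ((|q * j + 1| : ℤ) : ℝ) := by
  push_cast
  ring_nf

variable {q : ℤ}

lemma abs_neg_half_lt_of_mem_Sn (hq : 2 ≤ q) (hn : Even n) (hk : k ∈ Sn n)
    (hk' : k ≠ -(1 / 2)) : |2 * (q : ℝ) * (-(1 / 2)) + 1| < |2 * q * k + 1| := by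
  obtain ⟨j, hj, rfl⟩ := exists_odd_of_mem_Sn hn hk
  have hj₁ : j ≠ -1 := by rintro rfl; norm_num at hk'
  have hq' : (2 : ℝ) ≤ q := by exact_mod_cast hq
  rw [abs_two_mul_half_add_one, abs_of_nonpos (by linarith)]
  have := sub_one_lt_abs_mul_add_one_of_odd hq hj hj₁
  have : (q : ℝ) - 1 < ((|q * j + 1| : ℤ) : ℝ) := by exact_mod_cast this
  linarith

lemma abs_zero_lt_of_mem_Sn (hq : 2 ≤ q) (hn : Odd n) (hk : k ∈ Sn n) (hk' : k ≠ 0) :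
    |2 * (q : ℝ) * 0 + 1| < |2 * q * k + 1| := by
  obtain ⟨j, hj, rfl⟩ := exists_even_of_mem_Sn hn hk
  have hj₀ : j ≠ 0 := by rintro rfl; norm_num at hk'
  rw [abs_two_mul_half_add_one, mul_zero, zero_add, abs_one]
  exact_mod_cast one_lt_abs_mul_add_one_of_even hq hj hj₀

end Sn

lemma lt_of_abs_two_mul_add_one_lt {p q : ℤ} {a b d : ℝ} {f : ℝ → ℝ} (hq : 0 < q)
    (hb : b ≤ 0)
    (hp : 4 * a * (q : ℝ) < (p : ℝ))
    (hf : ∀ k : ℝ, f k =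
      -(p : ℝ) * k * ((q : ℝ) * k + 1) + a * (2 * (q : ℝ) * k + 1) ^ 2 +
        b * |2 * (q : ℝ) * k + 1| + d)
    ⦃k₁ k₂ : ℝ⦄ (h : |2 * (q : ℝ) * k₁ + 1| < |2 * q * k₂ + 1|) : f k₂ < f k₁ := by
  have hq' : (0 : ℝ) < q := by exact_mod_cast hq
  have hc : a - p / (4 * q) < 0 := by
    rw [sub_neg, lt_div_iff₀ (by positivity)]
    linarith
  have hform : ∀ k, f k = (a - p / (4 * q)) * |2 * (q : ℝ) * k + 1| ^ 2 +
      b * |2 * (q : ℝ) * k + 1| + (d + p / (4 * q)) := by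
    intro k
    rw [hf k, sq_abs]
    field_simp
    ring
  rw [hform, hform]
  exact strictAntiOn_quadratic hc hb _ (mem_Ici.2 (abs_nonneg _)) 
    (mem_Ici.2 (abs_nonneg _)) h

/-- The 'concave down' maximization step in the proof of Proposition 3.4 of
Kalfagianni–Tran. -/
theorem statement3 (p q : ℤ) (hq : 2 ≤ q) (a b d : ℝ) (hb : b ≤ 0)
    (hp : 4 * a * (q : ℝ) < (p : ℝ))
    (f : ℝ → ℝ)
    (hf : ∀ k : ℝ, f k =
      -(p : ℝ) * k * ((q : ℝ) * k + 1) + a * (2 * (q : ℝ) * k + 1) ^ 2 +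
        b * |2 * (q : ℝ) * k + 1| + d) :
    (∀ n : ℤ, 2 ≤ n → Even n → ∀ k ∈ Sn n, k ≠ -(1 / 2 : ℝ) →
      f k < f (-(1 / 2 : ℝ))) ∧
    (∀ n : ℤ, 1 ≤ n → Odd n → ∀ k ∈ Sn n, k ≠ (0 : ℝ) → f k < f 0) ∧
    (∀ n : ℤ, 1 ≤ n →
      IsGreatest ((fun k => (p : ℝ) * (q : ℝ) * ((n : ℝ) ^ 2 - 1) / 4 + f k) '' Sn n)
        ((p : ℝ) * (q : ℝ) / 4 * (n : ℝ) ^ 2 +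
          (if Even n then f (-(1 / 2 : ℝ)) - (p : ℝ) * (q : ℝ) / 4
           else f 0 - (p : ℝ) * (q : ℝ) / 4))) := by
  have key := lt_of_abs_two_mul_add_one_lt (by omega) hb hp hf
  have even_case :
      ∀ n : ℤ, Even n → ∀ k ∈ Sn n, k ≠ -(1 / 2 : ℝ) → f k < f (-(1 / 2)) :=
    fun n hn k hk hk' => key (abs_neg_half_lt_of_mem_Sn hq hn hk hk')
  have odd_case : ∀ n : ℤ, Odd n → ∀ k ∈ Sn n, k ≠ (0 : ℝ) → f k < f 0 :=
    fun n hn k hk hk' => key (abs_zero_lt_of_mem_Sn hq hn hk hk')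
  refine ⟨fun n _ => even_case n, fun n _ => odd_case n, fun n hn => ?_⟩
  have shift :
      ∀ x : ℝ, (p : ℝ) * q / 4 * n ^ 2 + (x - p * q / 4) = p * q * (n ^ 2 - 1) / 4 + x :=
    fun x => by ring
  rcases Int.even_or_odd n with hn' | hn'
  · rw [if_pos hn', shift]
    exact isGreatest_image_of_forall_ne_lt (neg_half_mem_Sn hn hn')
      fun k hk hk' => add_lt_add_right (even_case n hn' k hk hk') _
  · rw [if_neg (Int.not_even_iff_odd.2 hn'), shift]
    exact isGreatest_image_of_forall_ne_lt (zero_mem_Sn hn hn')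
      fun k hk hk' => add_lt_add_right (odd_case n hn' k hk hk') _
end

section
/- Let q ≥ 2 and p be integers, a a real number, and b, d : ℕ → ℝ periodic functions (of some common period π ≥ 1) with b(m) ≤ 0 for all m. For k ∈ S_n set f(k) = −pk(qk+1) + a(2qk+1)² + b(|2qk+1|)·|2qk+1| + d(|2qk+1|). Set M₁ = max{ |b(i) − b(j)| : i, j ∈ ℕ, i ≡ j (mod 2) } and M₂ = max{ 2b(i) + |b(i) − b(j)| + |d(i) − d(j)| : i, j ∈ ℕ, i ≡ j (mod 2) }. If p − (4a − M₁)q < 0, or p − (4a + M₁)q > max{0, M₂}, then there exists an integer N such that for every n ≥ N the function f attains its maximum on S_n at a unique point: there is k* ∈ S_n with f(k) < f(k*) for every k ∈ S_n with k ≠ k*. (The core 'unique maximal term' claim in the proof of Proposition 4.4.) -/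
/-!
Since `-pk(qk+1) = -(p/4q)((2qk+1)² - 1)`, the function is `g(|2qk+1|) + p/4q` for the
quasi-quadratic `g(m) = αm² + b(m)m + d(m)` with `α = a - p/4q`. On `m ≡ m' (mod 2)`, `m < m'`,
the difference `g(m') - g(m)` is `(m' - m)(m' + m)α` up to errors controlled by `M₁` and `M₂`.
If `4α > M₁` it is positive once `m'` is large, so the maximum sits at `k = (n-1)/2`, where
`|2qk+1|` is largest; if `(4α + M₁)q < -max(0, M₂)` it is negative as soon as `m + m' ≥ 2q`,
so the maximum sits at `k ∈ {0, -1/2}`, where `|2qk+1|` is smallest.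
-/

def quasiQuadratic (α : ℝ) (b d : ℕ → ℝ) (m : ℕ) : ℝ := α * m ^ 2 + b m * m + d m

section QuasiQuadratic

variable {α M₁ : ℝ} {b d : ℕ → ℝ} {m m' : ℕ}

theorem quasiQuadratic_sub (α : ℝ) (b d : ℕ → ℝ) (m m' : ℕ) :
    quasiQuadratic α b d m' - quasiQuadratic α b d m =
      ((m' : ℝ) - m) * (α * (m' + m) + (b m' + b m) / 2) + (b m' - b m) * (m' + m) / 2 +
        (d m' - d m) := by
  unfold quasiQuadratic; ring

theorem quasiQuadratic_lt_of_large {B D : ℝ} (hα : M₁ < 4 * α) (hbb : |b m' - b m| ≤ M₁)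
    (hb : -B ≤ b m) (hb' : -B ≤ b m') (hd : |d m' - d m| ≤ D) (hmm' : m + 2 ≤ m')
    (hlarge : 4 * (B + D) < (4 * α - M₁) * m') :
    quasiQuadratic α b d m < quasiQuadratic α b d m' := by
  have hδ : (0 : ℝ) ≤ (m' : ℝ) - m - 2 := by
    rw [sub_sub, sub_nonneg]; exact_mod_cast hmm'
  have hσ : (0 : ℝ) ≤ m' + m := by positivity
  have hM₁ : 0 ≤ M₁ := (abs_nonneg _).trans hbb
  have hD : 0 ≤ D := (abs_nonneg _).trans hd
  have hbb' := (abs_le.1 hbb).1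
  have hd' := (abs_le.1 hd).1
  have hlarge' : 4 * (B + D) < (4 * α - M₁) * (m' + m) := by nlinarith
  rw [← sub_pos, quasiQuadratic_sub]
  have hb₂ : -B ≤ (b m' + b m) / 2 := by linarith
  nlinarith [mul_le_mul_of_nonneg_left hb₂ (by linarith : 0 ≤ (m' : ℝ) - m),
    mul_le_mul_of_nonneg_left hbb' (by linarith : 0 ≤ ((m' : ℝ) + m) / 2),
    mul_nonneg (mul_nonneg hM₁ hσ) hδ, mul_nonneg hD hδ,
    mul_lt_mul_of_pos_left hlarge' (by linarith : 0 < (m' : ℝ) - m)]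

theorem quasiQuadratic_lt_of_neg {M₂ : ℝ} (hbb : |b m' - b m| ≤ M₁)
    (hbd : 2 * b m' + |b m' - b m| + |d m' - d m| ≤ M₂) (hmm' : m + 2 ≤ m')
    (hneg : (4 * α + M₁) * (m + m') + 2 * M₂ < 0) :
    quasiQuadratic α b d m' < quasiQuadratic α b d m := by
  have hδ : (0 : ℝ) ≤ (m' : ℝ) - m - 2 := by
    rw [sub_sub, sub_nonneg]; exact_mod_cast hmm'
  have hσ : (0 : ℝ) ≤ m' + m := by positivity
  have hM₁ : 0 ≤ M₁ := (abs_nonneg _).trans hbb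
  have hbb' := (abs_le.1 hbb).2
  have hb : b m' + b m ≤ 2 * b m' + |b m' - b m| := by linarith [neg_abs_le (b m' - b m)]
  have hd := le_abs_self (d m' - d m)
  rw [← sub_neg, quasiQuadratic_sub]
  nlinarith [mul_le_mul_of_nonneg_left hbb' (by linarith : 0 ≤ ((m' : ℝ) + m) / 2),
    mul_le_mul_of_nonneg_left hb (by linarith : 0 ≤ (m' : ℝ) - m),
    mul_le_mul_of_nonneg_left hbd (by linarith : 0 ≤ (m' : ℝ) - m),
    mul_nonneg (mul_nonneg hM₁ hσ) hδ, mul_nonneg (abs_nonneg (d m' - d m)) hδ,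
    mul_lt_mul_of_pos_left hneg (by linarith : 0 < (m' : ℝ) - m)]

theorem neg_le_of_abs_sub_le_of_mod_two_eq {M : ℝ}
    (hb : ∀ i j : ℕ, i % 2 = j % 2 → |b i - b j| ≤ M) (i : ℕ) : -(M + |b 0| + |b 1|) ≤ b i := by
  have h := (abs_le.1 (hb i (i % 2) (Nat.mod_mod i 2).symm)).1
  rcases Nat.mod_two_eq_zero_or_one i with hi | hi <;> rw [hi] at h <;>
    linarith [neg_abs_le (b 0), neg_abs_le (b 1), abs_nonneg (b 0), abs_nonneg (b 1)]

theorem exists_quasiQuadratic_lt_of_mod_two_eq {M₂ : ℝ} (hα : M₁ < 4 * α)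
    (hb : ∀ i j : ℕ, i % 2 = j % 2 → |b i - b j| ≤ M₁)
    (hbd : ∀ i j : ℕ, i % 2 = j % 2 → 2 * b i + |b i - b j| + |d i - d j| ≤ M₂) :
    ∃ N : ℕ, ∀ m m' : ℕ, m % 2 = m' % 2 → m + 2 ≤ m' → N ≤ m' →
      quasiQuadratic α b d m < quasiQuadratic α b d m' := by
  have hB := neg_le_of_abs_sub_le_of_mod_two_eq hb
  set B := M₁ + |b 0| + |b 1|
  set D := M₂ + 2 * B
  obtain ⟨N, hN⟩ := exists_nat_gt (4 * (B + D) / (4 * α - M₁))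
  refine ⟨N, fun m m' hpar hmm' hm' =>
    quasiQuadratic_lt_of_large (D := D) hα (hb m' m hpar.symm) (hB m) (hB m') ?_ hmm' ?_⟩
  · linarith [hbd m' m hpar.symm, hB m', abs_nonneg (b m' - b m)]
  · rw [div_lt_iff₀' (by linarith)] at hN
    exact hN.trans_le (mul_le_mul_of_nonneg_left (by exact_mod_cast hm') (by linarith))

end QuasiQuadratic

theorem Int.natAbs_mul_add_one_mod_two {j j' : ℤ} (q : ℤ) (h : j % 2 = j' % 2) :
    (q * j + 1).natAbs % 2 = (q * j' + 1).natAbs % 2 := by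
  obtain ⟨t, rfl⟩ : ∃ t, j = j' + 2 * t := ⟨(j - j') / 2, by omega⟩
  rw [show q * (j' + 2 * t) = q * j' + 2 * (q * t) by ring]
  omega

theorem Int.natAbs_mul_add_one_add_two_le {q j n : ℤ} (hq : 2 ≤ q) (hj : |j| ≤ n)
    (hpar : j % 2 = n % 2) (hne : j ≠ n) :
    (q * j + 1).natAbs + 2 ≤ (q * n + 1).natAbs := by
  obtain ⟨hlo, hhi⟩ := abs_le.1 hj
  have hlo' : -(q * n) ≤ q * j := by nlinarith
  have hhi' : q * j + 2 * q ≤ q * n := by nlinarith [show j + 2 ≤ n by omega]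
  omega

theorem Int.natAbs_mul_add_one_add_two_le_and_two_mul_le {q j j₀ : ℤ} (hq : 2 ≤ q)
    (hj₀ : j₀ = 0 ∨ j₀ = -1) (hpar : j % 2 = j₀ % 2) (hne : j ≠ j₀) :
    (q * j₀ + 1).natAbs + 2 ≤ (q * j + 1).natAbs ∧
      2 * q ≤ (q * j₀ + 1).natAbs + (q * j + 1).natAbs := by
  have hqj₀ : q * j₀ = 0 ∨ q * j₀ = -q := by rcases hj₀ with rfl | rfl <;> simp
  rcases (by omega : j₀ + 2 ≤ j ∨ j ≤ j₀ - 2) with h | h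
  · have : q * j₀ + 2 * q ≤ q * j := by nlinarith
    omega
  · have : q * j ≤ q * j₀ - 2 * q := by nlinarith
    omega

/-- `S_n` is indexed by `j = 2k`, i.e. by `|j| ≤ n - 1` with `j ≡ n - 1 (mod 2)`. -/
def HasUniqueMaxOnS (f : ℤ → ℝ) (n : ℤ) : Prop :=
  ∃ j' : ℤ, (|j'| ≤ n - 1 ∧ j' % 2 = (n - 1) % 2) ∧
    ∀ j : ℤ, |j| ≤ n - 1 → j % 2 = (n - 1) % 2 → j ≠ j' → f j < f j'

section HasUniqueMaxOnS

variable {q n : ℤ} {F : ℕ → ℝ}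

theorem hasUniqueMaxOnS_of_lt_top (hq : 2 ≤ q) {N : ℕ}
    (hF : ∀ m m' : ℕ, m % 2 = m' % 2 → m + 2 ≤ m' → N ≤ m' → F m < F m') (hn : N + 1 ≤ n) :
    HasUniqueMaxOnS (fun j => F (q * j + 1).natAbs) n := by
  refine ⟨n - 1, ⟨abs_le.2 ⟨by omega, le_rfl⟩, rfl⟩, fun j hj hpar hne => hF _ _
    (Int.natAbs_mul_add_one_mod_two q hpar) (Int.natAbs_mul_add_one_add_two_le hq hj hpar hne) ?_⟩
  have : n - 1 ≤ q * (n - 1) := by nlinarith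
  omega

theorem hasUniqueMaxOnS_of_lt_bottom (hq : 2 ≤ q)
    (hF : ∀ m m' : ℕ, m % 2 = m' % 2 → m + 2 ≤ m' → 2 * q ≤ m + m' → F m' < F m) (hn : 1 ≤ n) :
    HasUniqueMaxOnS (fun j => F (q * j + 1).natAbs) n := by
  obtain ⟨j₀, hj₀, hpar₀⟩ : ∃ j₀ : ℤ, (j₀ = 0 ∨ j₀ = -1) ∧ j₀ % 2 = (n - 1) % 2 :=
    (Int.emod_two_eq_zero_or_one (n - 1)).elim (fun h => ⟨0, by omega⟩) fun h => ⟨-1, by omega⟩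
  refine ⟨j₀, ⟨abs_le.2 ⟨by omega, by omega⟩, hpar₀⟩, fun j hj hpar hne => ?_⟩
  have hpar' := hpar.trans hpar₀.symm
  obtain ⟨hgap, hsum⟩ := Int.natAbs_mul_add_one_add_two_le_and_two_mul_le hq hj₀ hpar' hne
  exact hF _ _ (Int.natAbs_mul_add_one_mod_two q hpar').symm hgap hsum

end HasUniqueMaxOnS

theorem eq_quasiQuadratic_natAbs {p q : ℤ} (hq : q ≠ 0) {a : ℝ} {b d : ℕ → ℝ} (j : ℤ) :
    -(p : ℝ) * ((j : ℝ) / 2) * ((q : ℝ) * ((j : ℝ) / 2) + 1) +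
        a * ((q : ℝ) * (j : ℝ) + 1) ^ 2 +
        b (q * j + 1).natAbs * |(q : ℝ) * (j : ℝ) + 1| + d (q * j + 1).natAbs =
      quasiQuadratic (a - p / (4 * q)) b d (q * j + 1).natAbs + p / (4 * q) := by
  have hq' : (q : ℝ) ≠ 0 := by exact_mod_cast hq
  simp only [quasiQuadratic, Nat.cast_natAbs, Int.cast_abs, Int.cast_add, Int.cast_mul,
    Int.cast_one, sq_abs]
  field_simp
  ring

/-- `f j` is the value of `f` at `k = j/2`, so that `2qk + 1 = qj + 1`. -/
theorem statement6_general (p q : ℤ) (hq : 2 ≤ q) (a : ℝ)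
    (b d : ℕ → ℝ)
    (f : ℤ → ℝ)
    (hf : ∀ j : ℤ, f j =
      -(p : ℝ) * ((j : ℝ) / 2) * ((q : ℝ) * ((j : ℝ) / 2) + 1) +
        a * ((q : ℝ) * (j : ℝ) + 1) ^ 2 +
        b (q * j + 1).natAbs * |(q : ℝ) * (j : ℝ) + 1| + d (q * j + 1).natAbs)
    (M₁ M₂ : ℝ)
    (hM₁ : IsGreatest {x : ℝ | ∃ i j : ℕ, i % 2 = j % 2 ∧ x = |b i - b j|} M₁)
    (hM₂ : IsGreatest
      {x : ℝ | ∃ i j : ℕ, i % 2 = j % 2 ∧ x = 2 * b i + |b i - b j| + |d i - d j|} M₂)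
    (hcond : (p : ℝ) - (4 * a - M₁) * (q : ℝ) < 0 ∨
      max 0 M₂ < (p : ℝ) - (4 * a + M₁) * (q : ℝ)) :
    ∃ N : ℤ, ∀ n : ℤ, N ≤ n →
      ∃ j' : ℤ, (|j'| ≤ n - 1 ∧ j' % 2 = (n - 1) % 2) ∧
        ∀ j : ℤ, |j| ≤ n - 1 → j % 2 = (n - 1) % 2 → j ≠ j' → f j < f j' := by
  have hq₀ : (0 : ℝ) < q := by exact_mod_cast (by omega : 0 < q)
  set α := a - p / (4 * q)
  have h4α : 4 * α * q = 4 * a * q - p := by simp only [α]; field_simp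
  have hf' : f = fun j => quasiQuadratic α b d (q * j + 1).natAbs + p / (4 * q) :=
    funext fun j => (hf j).trans (eq_quasiQuadratic_natAbs (by omega) j)
  have hb (i j : ℕ) (h : i % 2 = j % 2) : |b i - b j| ≤ M₁ := hM₁.2 ⟨i, j, h, rfl⟩
  have hbd (i j : ℕ) (h : i % 2 = j % 2) : 2 * b i + |b i - b j| + |d i - d j| ≤ M₂ :=
    hM₂.2 ⟨i, j, h, rfl⟩
  rw [hf']
  rcases hcond with hlt | hgt
  · obtain ⟨N, hN⟩ := exists_quasiQuadratic_lt_of_mod_two_eq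
      (lt_of_mul_lt_mul_right (by linarith) hq₀.le : M₁ < 4 * α) hb hbd
    exact ⟨N + 1, fun n hn => hasUniqueMaxOnS_of_lt_top hq
      (fun m m' hpar hmm' hm' => (add_lt_add_iff_right _).2 (hN m m' hpar hmm' hm')) hn⟩
  · have hlead : 4 * α + M₁ < 0 := by nlinarith [le_max_left 0 M₂]
    have hneg (m m' : ℕ) (hsum : 2 * q ≤ (m + m' : ℤ)) : (4 * α + M₁) * (m + m') + 2 * M₂ < 0 := by
      have hsum' : 2 * (q : ℝ) ≤ m + m' := by exact_mod_cast hsum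
      nlinarith [mul_le_mul_of_nonpos_left hsum' hlead.le, le_max_right 0 M₂]
    exact ⟨1, fun n hn => hasUniqueMaxOnS_of_lt_bottom hq (fun m m' hpar hmm' hsum =>
      (add_lt_add_iff_right _).2 (quasiQuadratic_lt_of_neg (hb _ _ hpar.symm)
        (hbd _ _ hpar.symm) hmm' (hneg m m' hsum))) hn⟩

/-- The core 'unique maximal term' claim in the proof of Proposition 4.4 of
Kalfagianni–Tran.  Here the set `S_n` of integers/half-odd-integers `k` with
`|k| ≤ (n−1)/2` and `k ≡ (n−1)/2 (mod 1)` is parametrized as `k = j/2` by the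
integers `j` with `|j| ≤ n − 1` and `j ≡ n − 1 (mod 2)`, and `f j` denotes the
value of the function of the statement at `k = j/2`; note `2qk + 1 = qj + 1`. -/
theorem statement6 (p q : ℤ) (hq : 2 ≤ q) (a : ℝ)
    (π : ℕ) (hπ : 1 ≤ π) (b d : ℕ → ℝ)
    (hbper : ∀ m : ℕ, b (m + π) = b m) (hdper : ∀ m : ℕ, d (m + π) = d m)
    (hble : ∀ m : ℕ, b m ≤ 0)
    (f : ℤ → ℝ)
    (hf : ∀ j : ℤ, f j =
      -(p : ℝ) * ((j : ℝ) / 2) * ((q : ℝ) * ((j : ℝ) / 2) + 1) +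
        a * ((q : ℝ) * (j : ℝ) + 1) ^ 2 +
        b (q * j + 1).natAbs * |(q : ℝ) * (j : ℝ) + 1| + d (q * j + 1).natAbs)
    (M₁ M₂ : ℝ)
    (hM₁ : IsGreatest {x : ℝ | ∃ i j : ℕ, i % 2 = j % 2 ∧ x = |b i - b j|} M₁)
    (hM₂ : IsGreatest
      {x : ℝ | ∃ i j : ℕ, i % 2 = j % 2 ∧ x = 2 * b i + |b i - b j| + |d i - d j|} M₂)
    (hcond : (p : ℝ) - (4 * a - M₁) * (q : ℝ) < 0 ∨
      max 0 M₂ < (p : ℝ) - (4 * a + M₁) * (q : ℝ)) :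
    ∃ N : ℤ, ∀ n : ℤ, N ≤ n →
      ∃ j' : ℤ, (|j'| ≤ n - 1 ∧ j' % 2 = (n - 1) % 2) ∧
        ∀ j : ℤ, |j| ≤ n - 1 → j % 2 = (n - 1) % 2 → j ≠ j' → f j < f j' :=
  statement6_general p q hq a b d f hf M₁ M₂ hM₁ hM₂ hcond
end

section
/- Let m₁ ≤ 0 and m₂ ≥ 1 be integers such that either 1 + m₁ + m₂ ≤ 0, or (1 + m₁ + m₂ > 0 and 1 + 2m₁ + m₂ < 0). Then for every integer n ≥ 0, Q(n, n, 0) = (1/2 + 2m₂)n² + (3/2 + m₁ + 4m₂)n; consequently, for every n ≥ 1, Q(n−1, n−1, 0) + (n−1)/2 = (1/2 + 2m₂)n² + (1 + m₁)n − (3/2 + m₁ + 2m₂), and 1 + m₁ < 0. (Case B-1 of Theorem 6.2 on 2-fusion knots.) -/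
/-- The Garoufalidis–van der Veen degree function `Q(n, k₁, k₂)` for the 2-fusion
knot `K(m₁, m₂)`. -/
def Q (m₁ m₂ : ℤ) (n k₁ k₂ : ℚ) : ℚ :=
  let μ : ℚ := min (2 * k₁ + n) (min (2 * k₁ + k₂ + n) (k₂ + 2 * n))
  k₁ / 2 - 3 * k₁ ^ 2 / 2 - 3 * k₁ * k₂ - k₂ ^ 2 - (m₁ : ℚ) * k₁ - (m₁ : ℚ) * k₁ ^ 2
    - (m₂ : ℚ) * k₂ - (m₂ : ℚ) * k₂ ^ 2 - 6 * k₁ * n - 3 * k₂ * n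
    + 2 * (m₁ : ℚ) * n + 4 * (m₂ : ℚ) * n - (m₂ : ℚ) * k₂ * n
    - 2 * n ^ 2 + (m₁ : ℚ) * n ^ 2 + 2 * (m₂ : ℚ) * n ^ 2
    + ((1 + 8 * k₁ + 4 * k₂ + 8 * n) * μ - 3 * μ ^ 2) / 2

lemma Q_diag (m₁ m₂ : ℤ) (x : ℚ) (hx : 0 ≤ x) :
    Q m₁ m₂ x x 0 =
      (1 / 2 + 2 * (m₂ : ℚ)) * x ^ 2 + (3 / 2 + (m₁ : ℚ) + 4 * (m₂ : ℚ)) * x := by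
  have hμ : min (2 * x + x) (min (2 * x + 0 + x) (0 + 2 * x)) = 2 * x := by
    rw [min_eq_right ((min_le_right _ _).trans (by linarith)),
      min_eq_right (by linarith)]
    ring
  simp only [Q, hμ]
  ring

/-- Case B-1 of Theorem 6.2 of Kalfagianni–Tran on 2-fusion knots. -/
theorem statement9 (m₁ m₂ : ℤ) (hm₁ : m₁ ≤ 0) (hm₂ : 1 ≤ m₂)
    (hcase : 1 + m₁ + m₂ ≤ 0 ∨ (0 < 1 + m₁ + m₂ ∧ 1 + 2 * m₁ + m₂ < 0)) :
    (∀ n : ℕ, Q m₁ m₂ (n : ℚ) (n : ℚ) 0 =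
      (1 / 2 + 2 * (m₂ : ℚ)) * (n : ℚ) ^ 2 +
        (3 / 2 + (m₁ : ℚ) + 4 * (m₂ : ℚ)) * (n : ℚ)) ∧
    (∀ n : ℕ, 1 ≤ n →
      Q m₁ m₂ ((n : ℚ) - 1) ((n : ℚ) - 1) 0 + ((n : ℚ) - 1) / 2 =
        (1 / 2 + 2 * (m₂ : ℚ)) * (n : ℚ) ^ 2 + (1 + (m₁ : ℚ)) * (n : ℚ) -
          (3 / 2 + (m₁ : ℚ) + 2 * (m₂ : ℚ))) ∧
    1 + (m₁ : ℚ) < 0 := by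
  refine ⟨fun n => Q_diag m₁ m₂ n (Nat.cast_nonneg n), fun n hn => ?_, ?_⟩
  · have h1 : (1 : ℚ) ≤ (n : ℚ) := by exact_mod_cast hn
    rw [Q_diag m₁ m₂ ((n : ℚ) - 1) (by linarith)]
    ring
  · have h : 1 + m₁ < 0 := by omega
    have : ((1 + m₁ : ℤ) : ℚ) < 0 := by exact_mod_cast h
    push_cast at this
    linarith
end

section
/- Let m₂ ≤ −2 and m₁ be integers with 2m₁ > −3m₂. For each natural number n set c₃(n) = (−3/2 + m₁ + m₂ + (1 + m₂)n)/(1 − 2m₁ − 2m₂), let k₁(n) be an integer at minimal distance from c₃(n) (either choice at ties), and set δ(n) = Q(n, k₁(n), k₁(n)) if c₃(n) ∉ 1/2 + ℤ, and δ(n) = Q(n, k₁(n), k₁(n)) − (c₃(n) + 1/2) if c₃(n) ∈ 1/2 + ℤ. Then there exist an integer N and a periodic function D : ℕ → ℚ such that for all n ≥ N, δ(n−1) + (n−1)/2 = A·n² + B(n)·n + D(n), where A = (2m₁ + 3m₂)²/(2(2m₁ + 2m₂ − 1)), and B(n) = (2m₁ − 5)(1 + m₂)/(2(2m₁ + 2m₂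 − 1)) if (−1 + (1 + m₂)(n − 1))/(2m₁ + 2m₂ − 1) ∉ ℤ, while B(n) = (2m₁ − 3)(1 + m₂)/(2(2m₁ + 2m₂ − 1)) if (−1 + (1 + m₂)(n − 1))/(2m₁ + 2m₂ − 1) ∈ ℤ; moreover B(n) < 0 for all n. (Case C-2 of Theorem 6.2 on 2-fusion knots.) -/
def IsHalfInt (x : ℚ) : Prop := ∃ z : ℤ, x = 1 / 2 + z

lemma isHalfInt_add_intCast_iff (x : ℚ) (z : ℤ) : IsHalfInt (x + z) ↔ IsHalfInt x := by
  constructor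
  · rintro ⟨w, hw⟩
    exact ⟨w - z, by push_cast; linarith⟩
  · rintro ⟨w, rfl⟩
    exact ⟨w + z, by push_cast; ring⟩

lemma abs_sub_eq_of_nearest_of_eq_add_intCast {α : Type*} [Ring α] [LinearOrder α]
    {x y : α} {k k' z : ℤ} (hk : ∀ j : ℤ, |x - k| ≤ |x - j|) (hk' : ∀ j : ℤ, |y - k'| ≤ |y - j|)
    (hxy : y = x + z) : |y - k'| = |x - k| := by
  refine le_antisymm ?_ ?_
  · simpa [hxy, add_sub_add_right_eq_sub] using hk' (k + z)
  · simpa [hxy, sub_sub_eq_add_sub, add_sub_assoc] using hk (k' - z)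

section TwoFusion

variable {m₁ m₂ : ℤ}

variable (m₁ m₂) in
/-- The vertex `c₃(n)` of the quadratic `k ↦ Q(n, k, k)`. -/
def center (n : ℚ) : ℚ :=
  (-(3 / 2) + (m₁ : ℚ) + (m₂ : ℚ) + (1 + (m₂ : ℚ)) * n) / (1 - 2 * (m₁ : ℚ) - 2 * (m₂ : ℚ))

lemma center_add_period (hd : 1 - 2 * (m₁ : ℚ) - 2 * (m₂ : ℚ) ≠ 0) (n : ℚ) :
    center m₁ m₂ (n + (2 * m₁ + 2 * m₂ - 1)) = center m₁ m₂ n + ((-(1 + m₂) : ℤ) : ℚ) := by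
  simp only [center]
  field_simp
  push_cast
  ring

lemma isHalfInt_center_iff (hd : 1 - 2 * (m₁ : ℚ) - 2 * (m₂ : ℚ) ≠ 0) (n : ℤ) :
    IsHalfInt (center m₁ m₂ n) ↔ (2 * m₁ + 2 * m₂ - 1) ∣ (-1 + (1 + m₂) * n) := by
  simp only [IsHalfInt, center, div_eq_iff hd]
  constructor
  · rintro ⟨z, hz⟩
    have hzQ : (-1 + (1 + m₂) * n : ℚ) = (2 * m₁ + 2 * m₂ - 1) * (-z - 1) := by linarith
    exact ⟨-z - 1, by exact_mod_cast hzQ⟩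
  · rintro ⟨u, hu⟩
    have huQ : (-1 + (1 + m₂) * n : ℚ) = (2 * m₁ + 2 * m₂ - 1) * u := by exact_mod_cast hu
    exact ⟨-u - 1, by push_cast; linarith⟩

lemma one_half_le_center (hm₂ : m₂ ≤ -2) (hm₁ : -(3 * m₂) < 2 * m₁) {n : ℚ}
    (hn : 2 * m₁ + 1 ≤ n) : 1 / 2 ≤ center m₁ m₂ n := by
  have hm₂' : (m₂ : ℚ) ≤ -2 := by exact_mod_cast hm₂
  have hm₁' : (1 : ℚ) ≤ 2 * m₁ + 3 * m₂ := by
    exact_mod_cast (by omega : (1 : ℤ) ≤ 2 * m₁ + 3 * m₂)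
  rw [center, le_div_iff_of_neg (by linarith)]
  linarith [mul_nonneg (by linarith : (0 : ℚ) ≤ n - (2 * m₁ + 1)) (by linarith : (0 : ℚ) ≤ -1 - m₂),
    mul_nonneg (by linarith : (0 : ℚ) ≤ m₁) (by linarith : (0 : ℚ) ≤ -2 - m₂)]

lemma center_le_sub_one_half (hm₂ : m₂ ≤ -2) (hm₁ : -(3 * m₂) < 2 * m₁) {n : ℚ} (hn : 1 ≤ n) :
    center m₁ m₂ n ≤ n - 1 / 2 := by
  have hm₂' : (m₂ : ℚ) ≤ -2 := by exact_mod_cast hm₂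
  have hm₁' : (1 : ℚ) ≤ 2 * m₁ + 3 * m₂ := by
    exact_mod_cast (by omega : (1 : ℤ) ≤ 2 * m₁ + 3 * m₂)
  rw [center, div_le_iff_of_neg (by linarith)]
  linarith [mul_nonneg (by linarith : (0 : ℚ) ≤ n - 1)
    (by linarith : (0 : ℚ) ≤ 2 * m₁ + 3 * m₂ - 1)]

/-- On `0 ≤ x ≤ n` the minimum `μ` is `2x + n`. -/
lemma Q_self_eq (hd : 1 - 2 * (m₁ : ℚ) - 2 * (m₂ : ℚ) ≠ 0) {n x : ℚ} (hx₀ : 0 ≤ x) (hxn : x ≤ n) :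
    Q m₁ m₂ n x x = (1 - 2 * m₁ - 2 * m₂) / 2 * ((x - center m₁ m₂ n) ^ 2 - center m₁ m₂ n ^ 2)
      + (m₁ + 2 * m₂ + 1 / 2) * n ^ 2 + (2 * m₁ + 4 * m₂ + 1 / 2) * n := by
  rw [Q, min_eq_left (le_min (by linarith) (by linarith)), center]
  field_simp
  ring

lemma Q_nearest_eq (hm₂ : m₂ ≤ -2) (hm₁ : -(3 * m₂) < 2 * m₁) {n : ℚ} (hn : 2 * m₁ + 1 ≤ n)
    {k : ℤ} (hk : ∀ j : ℤ, |center m₁ m₂ n - k| ≤ |center m₁ m₂ n - j|) :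
    Q m₁ m₂ n k k = (1 - 2 * m₁ - 2 * m₂) / 2 * ((center m₁ m₂ n - k) ^ 2 - center m₁ m₂ n ^ 2)
      + (m₁ + 2 * m₂ + 1 / 2) * n ^ 2 + (2 * m₁ + 4 * m₂ + 1 / 2) * n := by
  have hm₁' : (7 : ℚ) ≤ 2 * m₁ := by exact_mod_cast (by omega : (7 : ℤ) ≤ 2 * m₁)
  have hd : 1 - 2 * (m₁ : ℚ) - 2 * (m₂ : ℚ) ≠ 0 := by
    exact_mod_cast (by omega : 1 - 2 * m₁ - 2 * m₂ ≠ 0)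
  have hlo := one_half_le_center hm₂ hm₁ hn
  have hhi := center_le_sub_one_half hm₂ hm₁ (n := n) (by linarith)
  have hdist := abs_le.mp ((hk (round (center m₁ m₂ n))).trans (abs_sub_round _))
  rw [Q_self_eq hd (by linarith) (by linarith)]
  ring

open Classical in
variable (m₁ m₂) in
/-- `D(m + 1)`: the constant term of the quadratic part, plus the square of the distance from
`c₃(m)` to its nearest integer `k m`, plus the constant part of the tie correction. -/
noncomputable def periodicPart (k : ℕ → ℤ) (m : ℕ) : ℚ :=
  (29 + 8 * m₂ - 32 * m₂ ^ 2 - 20 * m₁ - 48 * m₁ * m₂ - 12 * m₁ ^ 2) / (8 * (2 * m₁ + 2 * m₂ - 1))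
    + (1 - 2 * m₁ - 2 * m₂) / 2 * (center m₁ m₂ m - k m) ^ 2 +
    if IsHalfInt (center m₁ m₂ m) then -((m₂ : ℚ) + 2) / (2 * m₁ + 2 * m₂ - 1) else 0

lemma periodicPart_periodic (hd : 0 < 2 * m₁ + 2 * m₂ - 1) {k : ℕ → ℤ}
    (hk : ∀ m : ℕ, ∀ j : ℤ, |center m₁ m₂ m - k m| ≤ |center m₁ m₂ m - j|) :
    Function.Periodic (periodicPart m₁ m₂ k) (2 * m₁ + 2 * m₂ - 1).toNat := by
  intro m
  have hdQ : 1 - 2 * (m₁ : ℚ) - 2 * (m₂ : ℚ) ≠ 0 := by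
    exact_mod_cast (by omega : 1 - 2 * m₁ - 2 * m₂ ≠ 0)
  have hshift : center m₁ m₂ ↑(m + (2 * m₁ + 2 * m₂ - 1).toNat) =
      center m₁ m₂ m + ((-(1 + m₂) : ℤ) : ℚ) := by
    rw [← center_add_period hdQ]
    congr 1
    exact_mod_cast
      (by omega : ((m + (2 * m₁ + 2 * m₂ - 1).toNat : ℕ) : ℤ) = m + (2 * m₁ + 2 * m₂ - 1))
  have hdist := abs_sub_eq_of_nearest_of_eq_add_intCast (hk m) (hk _) hshift
  rw [periodicPart, periodicPart, ← sq_abs (_ - (k _ : ℚ)), hdist, sq_abs, hshift,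
    isHalfInt_add_intCast_iff]

lemma center_sq_part_eq (hd : 2 * (m₁ : ℚ) + 2 * m₂ - 1 ≠ 0) (m : ℚ) :
    -((1 - 2 * m₁ - 2 * m₂) / 2 * center m₁ m₂ m ^ 2) + (m₁ + 2 * m₂ + 1 / 2) * m ^ 2
        + (2 * m₁ + 4 * m₂ + 1 / 2) * m + m / 2 =
      (2 * m₁ + 3 * m₂) ^ 2 / (2 * (2 * m₁ + 2 * m₂ - 1)) * (m + 1) ^ 2
        + (2 * m₁ - 5) * (1 + m₂) / (2 * (2 * m₁ + 2 * m₂ - 1)) * (m + 1)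
        + (29 + 8 * m₂ - 32 * m₂ ^ 2 - 20 * m₁ - 48 * m₁ * m₂ - 12 * m₁ ^ 2)
          / (8 * (2 * m₁ + 2 * m₂ - 1)) := by
  rw [center, show 1 - 2 * (m₁ : ℚ) - 2 * m₂ = -(2 * m₁ + 2 * m₂ - 1) by ring, div_neg]
  have hd' : 2 * ((m₁ : ℚ) + m₂) - 1 ≠ 0 := by rwa [mul_add]
  field_simp
  ring

lemma sub_center_add_one_half_eq (hd : 2 * (m₁ : ℚ) + 2 * m₂ - 1 ≠ 0) (m : ℚ) :
    (2 * m₁ - 5) * (1 + m₂) / (2 * (2 * m₁ + 2 * m₂ - 1)) * (m + 1) - (center m₁ m₂ m + 1 / 2) =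
      (2 * m₁ - 3) * (1 + m₂) / (2 * (2 * m₁ + 2 * m₂ - 1)) * (m + 1)
        - (m₂ + 2) / (2 * m₁ + 2 * m₂ - 1) := by
  rw [center, show 1 - 2 * (m₁ : ℚ) - 2 * m₂ = -(2 * m₁ + 2 * m₂ - 1) by ring, div_neg]
  have hd' : 2 * ((m₁ : ℚ) + m₂) - 1 ≠ 0 := by rwa [mul_add]
  field_simp
  ring

end TwoFusion

/-- Case C-2 of Theorem 6.2 of Kalfagianni–Tran on 2-fusion knots. -/
theorem statement12 (m₁ m₂ : ℤ) (hm₂ : m₂ ≤ -2) (hm₁ : -(3 * m₂) < 2 * m₁)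
    (c₃ : ℕ → ℚ)
    (hc₃ : ∀ n : ℕ, c₃ n = (-(3 / 2) + (m₁ : ℚ) + (m₂ : ℚ) + (1 + (m₂ : ℚ)) * n) /
      (1 - 2 * (m₁ : ℚ) - 2 * (m₂ : ℚ)))
    (k₁ : ℕ → ℤ)
    (hk₁near : ∀ n : ℕ, ∀ j : ℤ, |c₃ n - (k₁ n : ℚ)| ≤ |c₃ n - (j : ℚ)|)
    (δ : ℕ → ℚ)
    (hδ₁ : ∀ n : ℕ, (¬ ∃ z : ℤ, c₃ n = 1 / 2 + (z : ℚ)) →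
      δ n = Q m₁ m₂ (n : ℚ) (k₁ n : ℚ) (k₁ n : ℚ))
    (hδ₂ : ∀ n : ℕ, (∃ z : ℤ, c₃ n = 1 / 2 + (z : ℚ)) →
      δ n = Q m₁ m₂ (n : ℚ) (k₁ n : ℚ) (k₁ n : ℚ) - (c₃ n + 1 / 2))
    (B : ℕ → ℚ)
    (hB : ∀ n : ℕ, B n =
      if (2 * m₁ + 2 * m₂ - 1 : ℤ) ∣ (-1 + (1 + m₂) * ((n : ℤ) - 1)) then
        (2 * (m₁ : ℚ) - 3) * (1 + (m₂ : ℚ)) /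
          (2 * (2 * (m₁ : ℚ) + 2 * (m₂ : ℚ) - 1))
      else
        (2 * (m₁ : ℚ) - 5) * (1 + (m₂ : ℚ)) /
          (2 * (2 * (m₁ : ℚ) + 2 * (m₂ : ℚ) - 1))) :
    ∃ (N : ℕ) (D : ℕ → ℚ) (π : ℕ), 0 < π ∧ (∀ n : ℕ, D (n + π) = D n) ∧
      (∀ n : ℕ, N ≤ n →
        δ (n - 1) + ((n : ℚ) - 1) / 2 =
          ((2 * (m₁ : ℚ) + 3 * (m₂ : ℚ)) ^ 2 /
              (2 * (2 * (m₁ : ℚ) + 2 * (m₂ : ℚ) - 1))) * (n : ℚ) ^ 2 +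
          B n * (n : ℚ) + D n) ∧
      (∀ n : ℕ, B n < 0) := by
  have hc : ∀ n : ℕ, c₃ n = center m₁ m₂ n := hc₃
  simp only [hc] at hk₁near hδ₁ hδ₂
  have hd : 0 < 2 * m₁ + 2 * m₂ - 1 := by omega
  have hdQ : 0 < 2 * (m₁ : ℚ) + 2 * m₂ - 1 := by exact_mod_cast hd
  have hper := periodicPart_periodic hd hk₁near
  set π := (2 * m₁ + 2 * m₂ - 1).toNat
  refine ⟨2 * m₁.toNat + 2, fun n ↦ periodicPart m₁ m₂ k₁ (n + (π - 1)), π, by omega,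
    hper.add_const (π - 1), ?_, ?_⟩
  · intro n hn
    obtain ⟨m, rfl⟩ : ∃ m, n = m + 1 := ⟨n - 1, by omega⟩
    have hQ := Q_nearest_eq hm₂ hm₁ (n := m) (by exact_mod_cast (by omega : 2 * m₁ + 1 ≤ m))
      (hk₁near m)
    have htie : IsHalfInt (center m₁ m₂ m) ↔
        (2 * m₁ + 2 * m₂ - 1) ∣ (-1 + (1 + m₂) * ((m : ℤ) + 1 - 1)) := by
      simpa using isHalfInt_center_iff (by linarith) (m : ℤ)
    dsimp only
    rw [show m + 1 + (π - 1) = m + π by omega, hper m, Nat.add_sub_cancel, hB, periodicPart]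
    push_cast
    by_cases ht : IsHalfInt (center m₁ m₂ m)
    · rw [hδ₂ m ht, hQ, if_pos (htie.1 ht), if_pos ht]
      linear_combination center_sq_part_eq hdQ.ne' m + sub_center_add_one_half_eq hdQ.ne' m
    · rw [hδ₁ m ht, hQ, if_neg (mt htie.2 ht), if_neg ht]
      linear_combination center_sq_part_eq hdQ.ne' m
  · have hm₁' : (7 : ℚ) ≤ 2 * m₁ := by exact_mod_cast (by omega : (7 : ℤ) ≤ 2 * m₁)
    have hm₂' : (m₂ : ℚ) ≤ -2 := by exact_mod_cast hm₂
    intro n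
    rw [hB n]
    split_ifs <;> exact div_neg_of_neg_of_pos (mul_neg_of_pos_of_neg (by linarith) (by linarith))
      (by linarith)
end

section
/- For all integers m₁, m₂ with m₂ ∉ {−1, 0} and every natural number n, define b(m₁, m₂, n) as follows: b = m₂(1 − m₁)/(2(−1 + m₁ + m₂)) if m₁ ≥ 1 and m₂ ≥ 1; b = 1 + m₁ if m₁ ≤ 0, m₂ ≥ 1, and either 1 + m₁ + m₂ ≤ 0 or (1 + m₁ + m₂ > 0 and 1 + 2m₁ + m₂ < 0); b = m₁(m₂ − 1)/(2(1 + m₁ + m₂)) if m₁ ≤ 0, m₂ ≥ 1, 1 + m₁ + m₂ > 0 and 1 + 2m₁ + m₂ ≥ 0; b = 5/2 + m₁ + 3m₂ if m₂ ≤ −2 and 2m₁ ≤ −3m₂; and, if m₂ ≤ −2 and 2m₁ > −3m₂, b = (−5 + 2m₁)(1 + m₂)/(2(−1 + 2m₁ + 2m₂)) when (−1 + (1 + m₂)(n − 1))/(−1 + 2m₁ + 2m₂) ∉ ℤ and b = (−3 + 2m₁)(1 + m₂)/(2(−1 + 2m₁ + 2m₂)) when (−1 + (1 + m₂)(n − 1))/(−1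 + 2m₁ + 2m₂) ∈ ℤ. Then b(m₁, m₂, n) ≤ 0 for all such m₁, m₂, n; moreover, b(m₁, m₂, n) = 0 for some n if and only if (m₁ ∈ {0, 1} and m₂ ≥ 1) or (m₁, m₂) = (−1, 1). (The sign statement of Theorem 6.2: the linear coefficient b_K(n) of d₊[J_K(n)] for the 2-fusion knot K(m₁,m₂) is nonpositive and vanishes exactly in these cases.) -/
/-- The linear coefficient `b_K(n)` of `d₊[J_K(n)]` for the 2-fusion knot
`K(m₁, m₂)` with `m₂ ∉ {−1, 0}`, as computed in Theorem 6.2 of Kalfagianni–Tran. -/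
def bCoeff (m₁ m₂ : ℤ) (n : ℕ) : ℚ :=
  if 1 ≤ m₂ then
    if 1 ≤ m₁ then
      (m₂ : ℚ) * (1 - (m₁ : ℚ)) / (2 * (-1 + (m₁ : ℚ) + (m₂ : ℚ)))
    else
      if 1 + m₁ + m₂ ≤ 0 ∨ (0 < 1 + m₁ + m₂ ∧ 1 + 2 * m₁ + m₂ < 0) then
        1 + (m₁ : ℚ)
      else
        (m₁ : ℚ) * ((m₂ : ℚ) - 1) / (2 * (1 + (m₁ : ℚ) + (m₂ : ℚ)))
  else
    if 2 * m₁ ≤ -(3 * m₂) then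
      5 / 2 + (m₁ : ℚ) + 3 * (m₂ : ℚ)
    else
      if (-1 + 2 * m₁ + 2 * m₂ : ℤ) ∣ (-1 + (1 + m₂) * ((n : ℤ) - 1)) then
        (-3 + 2 * (m₁ : ℚ)) * (1 + (m₂ : ℚ)) /
          (2 * (-1 + 2 * (m₁ : ℚ) + 2 * (m₂ : ℚ)))
      else
        (-5 + 2 * (m₁ : ℚ)) * (1 + (m₂ : ℚ)) /
          (2 * (-1 + 2 * (m₁ : ℚ) + 2 * (m₂ : ℚ)))

/-- The sign statement of Theorem 6.2 of Kalfagianni–Tran: the linear coefficient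
`b_K(n)` for the 2-fusion knot `K(m₁,m₂)` is nonpositive, and vanishes (for some
`n`) exactly when `m₁ ∈ {0, 1}` and `m₂ ≥ 1`, or `(m₁, m₂) = (−1, 1)`. -/
theorem statement14 (m₁ m₂ : ℤ) (h₁ : m₂ ≠ -1) (h₂ : m₂ ≠ 0) :
    (∀ n : ℕ, bCoeff m₁ m₂ n ≤ 0) ∧
    ((∃ n : ℕ, bCoeff m₁ m₂ n = 0) ↔
      ((m₁ = 0 ∨ m₁ = 1) ∧ 1 ≤ m₂) ∨ (m₁ = -1 ∧ m₂ = 1)) := by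
  constructor
  · intro n
    unfold bCoeff
    split_ifs with h1 h2 h3 h4 h5
    · -- m₂ ≥ 1, m₁ ≥ 1
      have a1 : (1 : ℚ) ≤ (m₁ : ℚ) := by exact_mod_cast h2
      have a2 : (1 : ℚ) ≤ (m₂ : ℚ) := by exact_mod_cast h1
      exact div_nonpos_iff.mpr (Or.inr ⟨by nlinarith, by linarith⟩)
    · -- m₂ ≥ 1, m₁ ≤ 0, special condition
      have hm : m₁ ≤ -1 := by omega
      have : (m₁ : ℚ) ≤ -1 := by exact_mod_cast hm
      linarith
    · -- m₂ ≥ 1, m₁ ≤ 0, else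
      push_neg at h3
      have a1 : (m₁ : ℚ) ≤ 0 := by exact_mod_cast (by omega : m₁ ≤ 0)
      have a2 : (1 : ℚ) ≤ (m₂ : ℚ) := by exact_mod_cast h1
      have a3 : (1 : ℚ) ≤ 1 + (m₁ : ℚ) + (m₂ : ℚ) := by
        exact_mod_cast (by omega : (1 : ℤ) ≤ 1 + m₁ + m₂)
      exact div_nonpos_iff.mpr (Or.inr ⟨by nlinarith, by linarith⟩)
    · -- m₂ ≤ -2, 2m₁ ≤ -3m₂
      have hi : (5 : ℤ) + 2 * m₁ + 6 * m₂ ≤ -1 := by omega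
      have : (5 : ℚ) + 2 * (m₁ : ℚ) + 6 * (m₂ : ℚ) ≤ -1 := by exact_mod_cast hi
      linarith
    · -- m₂ ≤ -2, 2m₁ > -3m₂, divisible
      have a1 : (7 : ℚ) ≤ 2 * (m₁ : ℚ) := by exact_mod_cast (by omega : (7:ℤ) ≤ 2 * m₁)
      have a2 : (m₂ : ℚ) ≤ -2 := by exact_mod_cast (by omega : m₂ ≤ -2)
      have a3 : (2 : ℚ) ≤ -1 + 2 * (m₁ : ℚ) + 2 * (m₂ : ℚ) := by
        exact_mod_cast (by omega : (2:ℤ) ≤ -1 + 2 * m₁ + 2 * m₂)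
      exact div_nonpos_iff.mpr (Or.inr ⟨by nlinarith, by linarith⟩)
    · have a1 : (7 : ℚ) ≤ 2 * (m₁ : ℚ) := by exact_mod_cast (by omega : (7:ℤ) ≤ 2 * m₁)
      have a2 : (m₂ : ℚ) ≤ -2 := by exact_mod_cast (by omega : m₂ ≤ -2)
      have a3 : (2 : ℚ) ≤ -1 + 2 * (m₁ : ℚ) + 2 * (m₂ : ℚ) := by
        exact_mod_cast (by omega : (2:ℤ) ≤ -1 + 2 * m₁ + 2 * m₂)
      exact div_nonpos_iff.mpr (Or.inr ⟨by nlinarith, by linarith⟩)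
  · constructor
    · rintro ⟨n, hn⟩
      unfold bCoeff at hn
      split_ifs at hn with h1 h2 h3 h4 h5
      · -- m₂ ≥ 1, m₁ ≥ 1 : num = 0
        have a2 : (1 : ℚ) ≤ (m₂ : ℚ) := by exact_mod_cast h1
        have a1 : (1 : ℚ) ≤ (m₁ : ℚ) := by exact_mod_cast h2
        have hd : (2 : ℚ) * (-1 + (m₁ : ℚ) + (m₂ : ℚ)) ≠ 0 := ne_of_gt (by nlinarith)
        have hnum := (div_eq_zero_iff.mp hn).resolve_right hd
        rcases mul_eq_zero.mp hnum with h | h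
        · exfalso; linarith
        · have : m₁ = 1 := by exact_mod_cast (by linarith : (m₁ : ℚ) = 1)
          exact Or.inl ⟨Or.inr this, h1⟩
      · -- 1 + m₁ = 0 but condition forces m₁ ≤ -2 when m₂ ≥ 1 : contradiction
        have : m₁ = -1 := by exact_mod_cast (by linarith : (m₁ : ℚ) = -1)
        omega
      · push_neg at h3
        have hd : (2 : ℚ) * (1 + (m₁ : ℚ) + (m₂ : ℚ)) ≠ 0 := by
          have : (1 : ℚ) ≤ 1 + (m₁ : ℚ) + (m₂ : ℚ) := by
            exact_mod_cast (by omega : (1 : ℤ) ≤ 1 + m₁ + m₂)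
          nlinarith
        have hnum := (div_eq_zero_iff.mp hn).resolve_right hd
        rcases mul_eq_zero.mp hnum with h | h
        · have : m₁ = 0 := by exact_mod_cast h
          exact Or.inl ⟨Or.inl this, h1⟩
        · have hm : m₂ = 1 := by exact_mod_cast (by linarith : (m₂ : ℚ) = 1)
          omega
      · have hi : (5 : ℤ) + 2 * m₁ + 6 * m₂ ≤ -1 := by omega
        have : (5 : ℚ) + 2 * (m₁ : ℚ) + 6 * (m₂ : ℚ) ≤ -1 := by exact_mod_cast hi
        exfalso; linarith
      · exfalso
        have a1 : (7 : ℚ) ≤ 2 * (m₁ : ℚ) := by exact_mod_cast (by omega : (7:ℤ) ≤ 2 * m₁)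
        have a2 : (m₂ : ℚ) ≤ -2 := by exact_mod_cast (by omega : m₂ ≤ -2)
        have a3 : (2 : ℚ) ≤ -1 + 2 * (m₁ : ℚ) + 2 * (m₂ : ℚ) := by
          exact_mod_cast (by omega : (2:ℤ) ≤ -1 + 2 * m₁ + 2 * m₂)
        have : ((-3 : ℚ) + 2 * m₁) * (1 + m₂) / (2 * (-1 + 2 * (m₁:ℚ) + 2 * m₂)) < 0 :=
          div_neg_of_neg_of_pos (by nlinarith) (by linarith)
        linarith
      · exfalso
        have a1 : (7 : ℚ) ≤ 2 * (m₁ : ℚ) := by exact_mod_cast (by omega : (7:ℤ) ≤ 2 * m₁)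
        have a2 : (m₂ : ℚ) ≤ -2 := by exact_mod_cast (by omega : m₂ ≤ -2)
        have a3 : (2 : ℚ) ≤ -1 + 2 * (m₁ : ℚ) + 2 * (m₂ : ℚ) := by
          exact_mod_cast (by omega : (2:ℤ) ≤ -1 + 2 * m₁ + 2 * m₂)
        have : ((-5 : ℚ) + 2 * m₁) * (1 + m₂) / (2 * (-1 + 2 * (m₁:ℚ) + 2 * m₂)) < 0 :=
          div_neg_of_neg_of_pos (by nlinarith) (by linarith)
        linarith
    · rintro (⟨(rfl | rfl), hm2⟩ | ⟨rfl, rfl⟩)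
      · refine ⟨0, ?_⟩
        unfold bCoeff
        rw [if_pos hm2, if_neg (by omega), if_neg (by omega)]
        norm_num
      · refine ⟨0, ?_⟩
        unfold bCoeff
        rw [if_pos hm2, if_pos le_rfl]
        norm_num
      · refine ⟨0, ?_⟩
        unfold bCoeff
        rw [if_pos le_rfl, if_neg (by omega), if_neg (by omega)]
        norm_num
end
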